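/- arXiv:1811.05189 — 11 statements merged into one kernel-verified Lean document; each statement's English description precedes it below -/
import Mathlib

section
/- For every rational number α ∉ {0, -1} (so the curve is nonsingular), the points P = (α, α), 2P = (0,0), 3P = (−1,−1), 4P = (0,−α), 5P = (α,−α²) lie on the elliptic curve E_α : Y² + (α−2)XY + αY = X³, and P is a torsion point of order 6. -/
/-!
Everything is a chord-and-tangent computation on `E_α`, valid over any field. The tangent at
`P = (α, α)` has slope `2`, and adding `P` to `2P`, `3P`, `4P` goes along chords of slopes `1`, `1`,
`2`. Then `5P = (α, -α²)` is the reflection `-P` of `P`, so `6P = O`, while none of `P, …, 5P` is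
`O`. The points are nonsingular because a partial derivative of the equation equals `±α`,
`±(α + 1)` or `±α(α + 1)` there.
-/

open WeierstrassCurve

namespace WeierstrassCurve.Affine.Point

variable {F : Type*} [Field F] [DecidableEq F] {W : Affine F}

lemma some_add_some_of_slope_eq {x₁ y₁ x₂ y₂ x₃ y₃ ℓ : F} {h₁ : W.Nonsingular x₁ y₁}
    {h₂ : W.Nonsingular x₂ y₂} (h₃ : W.Nonsingular x₃ y₃) (hxy : ¬(x₁ = x₂ ∧ y₁ = W.negY x₂ y₂))
    (hℓ : W.slope x₁ x₂ y₁ y₂ = ℓ) (hx : W.addX x₁ x₂ ℓ = x₃) (hy : W.addY x₁ x₂ y₁ ℓ = y₃) :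
    some _ _ h₁ + some _ _ h₂ = some _ _ h₃ := by
  subst hℓ hx hy
  exact add_some hxy

end WeierstrassCurve.Affine.Point

namespace SixTorsion

open WeierstrassCurve.Affine WeierstrassCurve.Affine.Point

variable {F : Type*} [Field F] {α : F}

def curve (α : F) : Affine F := { a₁ := α - 2, a₂ := 0, a₃ := α, a₄ := 0, a₆ := 0 }

lemma nonsingular_of_equation (x y : F) (heq : y ^ 2 + (α - 2) * x * y + α * y = x ^ 3)
    (hpartial : (α - 2) * y - 3 * x ^ 2 ≠ 0 ∨ 2 * y + (α - 2) * x + α ≠ 0) :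
    (curve α).Nonsingular x y := by
  rw [nonsingular_iff', equation_iff]
  simp only [curve]
  constructor
  · linear_combination heq
  · simpa using hpartial

lemma nonsingular_self_self (hα₀ : α ≠ 0) (hα₁ : α ≠ -1) : (curve α).Nonsingular α α :=
  nonsingular_of_equation _ _ (by ring) <| .inr <| by
    convert mul_ne_zero hα₀ (mt add_eq_zero_iff_eq_neg.mp hα₁) using 1; ring

lemma nonsingular_zero_zero (hα₀ : α ≠ 0) : (curve α).Nonsingular 0 0 :=
  nonsingular_of_equation _ _ (by ring) <| .inr <| by simpa using hα₀

lemma nonsingular_neg_one_neg_one (hα₁ : α ≠ -1) : (curve α).Nonsingular (-1) (-1) :=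
  nonsingular_of_equation _ _ (by ring) <| .inl <| by
    convert neg_ne_zero.mpr (mt add_eq_zero_iff_eq_neg.mp hα₁) using 1; ring

lemma nonsingular_zero_neg (hα₀ : α ≠ 0) : (curve α).Nonsingular 0 (-α) :=
  nonsingular_of_equation _ _ (by ring) <| .inr <| by
    convert neg_ne_zero.mpr hα₀ using 1; ring

lemma nonsingular_self_neg_sq (hα₀ : α ≠ 0) (hα₁ : α ≠ -1) :
    (curve α).Nonsingular α (-α ^ 2) :=
  nonsingular_of_equation _ _ (by ring) <| .inr <| by
    convert neg_ne_zero.mpr (mul_ne_zero hα₀ (mt add_eq_zero_iff_eq_neg.mp hα₁)) using 1; ring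

variable [DecidableEq F] (hα₀ : α ≠ 0) (hα₁ : α ≠ -1)

def P : (curve α).Point := .some α α (nonsingular_self_self hα₀ hα₁)

lemma two_nsmul_P : 2 • P hα₀ hα₁ = .some 0 0 (nonsingular_zero_zero hα₀) := by
  have hα : α * (α + 1) ≠ 0 := mul_ne_zero hα₀ (mt add_eq_zero_iff_eq_neg.mp hα₁)
  have hy : α ≠ (curve α).negY α α := fun h => hα <| by
    simp only [negY, curve] at h
    linear_combination h
  rw [two_nsmul]
  refine some_add_some_of_slope_eq _ (fun h => hy h.2) (ℓ := 2) ?_ ?_ ?_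
  · rw [slope_of_Y_ne rfl hy, div_eq_iff (sub_ne_zero.mpr hy)]
    simp only [negY, curve]
    ring
  · simp only [addX, curve]; ring
  · simp only [addY, negAddY, addX, negY, curve]; ring

lemma three_nsmul_P : 3 • P hα₀ hα₁ = .some (-1) (-1) (nonsingular_neg_one_neg_one hα₁) := by
  have hx : (0 : F) ≠ α := hα₀.symm
  rw [succ_nsmul, two_nsmul_P]
  refine some_add_some_of_slope_eq _ (fun h => hx h.1) (ℓ := 1) ?_ ?_ ?_
  · rw [slope_of_X_ne hx, div_self (sub_ne_zero.mpr hx)]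
  · simp only [addX, curve]; ring
  · simp only [addY, negAddY, addX, negY, curve]; ring

lemma four_nsmul_P : 4 • P hα₀ hα₁ = .some 0 (-α) (nonsingular_zero_neg hα₀) := by
  have hx : (-1 : F) ≠ α := hα₁.symm
  rw [succ_nsmul, three_nsmul_P]
  refine some_add_some_of_slope_eq _ (fun h => hx h.1) (ℓ := 1) ?_ ?_ ?_
  · rw [slope_of_X_ne hx, div_self (sub_ne_zero.mpr hx)]
  · simp only [addX, curve]; ring
  · simp only [addY, negAddY, addX, negY, curve]; ring

lemma five_nsmul_P : 5 • P hα₀ hα₁ = .some α (-α ^ 2) (nonsingular_self_neg_sq hα₀ hα₁) := by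
  have hx : (0 : F) ≠ α := hα₀.symm
  rw [succ_nsmul, four_nsmul_P]
  refine some_add_some_of_slope_eq _ (fun h => hx h.1) (ℓ := 2) ?_ ?_ ?_
  · rw [slope_of_X_ne hx, div_eq_iff (sub_ne_zero.mpr hx)]; ring
  · simp only [addX, curve]; ring
  · simp only [addY, negAddY, addX, negY, curve]; ring

lemma six_nsmul_P : 6 • P hα₀ hα₁ = 0 := by
  rw [succ_nsmul, five_nsmul_P]
  exact add_of_Y_eq rfl (by simp only [negY, curve]; ring)

lemma addOrderOf_P : addOrderOf (P hα₀ hα₁) = 6 := by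
  refine (addOrderOf_eq_iff (by norm_num)).mpr ⟨six_nsmul_P hα₀ hα₁, fun m hm6 hm0 => ?_⟩
  interval_cases m
  · rw [one_nsmul]; exact some_ne_zero _
  · rw [two_nsmul_P]; exact some_ne_zero _
  · rw [three_nsmul_P]; exact some_ne_zero _
  · rw [four_nsmul_P]; exact some_ne_zero _
  · rw [five_nsmul_P]; exact some_ne_zero _

end SixTorsion

/-- For rational `α ∉ {0, -1}`, the points `P = (α, α)`, `2P = (0,0)`, `3P = (−1,−1)`,
`4P = (0,−α)`, `5P = (α,−α²)` lie on the elliptic curve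
`E_α : Y² + (α−2)XY + αY = X³`, and `P` is a torsion point of order 6. -/
theorem torsion_structure (α : ℚ) (hα0 : α ≠ 0) (hα1 : α ≠ -1)
    (W : WeierstrassCurve.Affine ℚ)
    (hW : W = { a₁ := α - 2, a₂ := 0, a₃ := α, a₄ := 0, a₆ := 0 }) :
    ∃ (h1 : W.Nonsingular α α) (h2 : W.Nonsingular 0 0) (h3 : W.Nonsingular (-1) (-1))
      (h4 : W.Nonsingular 0 (-α)) (h5 : W.Nonsingular α (-α ^ 2)),
      2 • (WeierstrassCurve.Affine.Point.some _ _ h1) = WeierstrassCurve.Affine.Point.some _ _ h2 ∧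
      3 • (WeierstrassCurve.Affine.Point.some _ _ h1) = WeierstrassCurve.Affine.Point.some _ _ h3 ∧
      4 • (WeierstrassCurve.Affine.Point.some _ _ h1) = WeierstrassCurve.Affine.Point.some _ _ h4 ∧
      5 • (WeierstrassCurve.Affine.Point.some _ _ h1) = WeierstrassCurve.Affine.Point.some _ _ h5 ∧
      addOrderOf (WeierstrassCurve.Affine.Point.some _ _ h1) = 6 := by
  subst hW
  exact ⟨_, _, _, _, _, SixTorsion.two_nsmul_P hα0 hα1, SixTorsion.three_nsmul_P hα0 hα1,
    SixTorsion.four_nsmul_P hα0 hα1, SixTorsion.five_nsmul_P hα0 hα1,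
    SixTorsion.addOrderOf_P hα0 hα1⟩
end

section
/- On the curve defined by (x+1)(y+1)(x+y) = αxy, the rational maps X(x,y) = α(x+y+1)/(x+y−α), Y(x,y) = α(−αx+y+1)/(x+y−α) and x(X,Y) = (X−Y)/(X−α), y(X,Y) = (Y+(α−1)X+α)/(X−α) are mutually inverse birational maps onto the curve Y² + (α−2)XY + αY = X³. -/
/-!
With `c = α(α+1)` and `s = x + y - α`, the map to the Deuring form satisfies
`X - α = c/s`, `X - Y = (c/s)·x` and `Y + (α-1)X + α = (c/s)·y`; dually, with `t = X - α`,
the inverse map satisfies `x + y - α = c/t`, `α(x+y+1) = (c/t)·X` and `α(-αx+y+1) = (c/t)·Y`.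
So each composite divides `(c/s)·(x, y)` (resp. `(c/t)·(X, Y)`) by the nonzero scalar `c/s`
(resp. `c/t`), and is the identity. That each map lands on the other curve is a polynomial
identity after clearing denominators.
-/

namespace DeuringForm

variable {K : Type*} [Field K] {α x y X Y : K}

def OnPCurve (α x y : K) : Prop := (x + 1) * (y + 1) * (x + y) = α * x * y

def OnDeuringCurve (α X Y : K) : Prop := Y ^ 2 + (α - 2) * X * Y + α * Y = X ^ 3

def toDeuring (α x y : K) : K × K :=
  (α * (x + y + 1) / (x + y - α), α * (-α * x + y + 1) / (x + y - α))

def ofDeuring (α X Y : K) : K × K :=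
  ((X - Y) / (X - α), (Y + (α - 1) * X + α) / (X - α))

section toDeuring

variable (hs : x + y ≠ α)
include hs

theorem toDeuring_fst_sub_self : (toDeuring α x y).1 - α = α * (α + 1) / (x + y - α) := by
  have := sub_ne_zero.mpr hs
  simp only [toDeuring]
  field_simp
  ring

theorem toDeuring_fst_sub_snd :
    (toDeuring α x y).1 - (toDeuring α x y).2 = α * (α + 1) / (x + y - α) * x := by
  have := sub_ne_zero.mpr hs
  simp only [toDeuring]
  field_simp
  ring

theorem toDeuring_snd_add :
    (toDeuring α x y).2 + (α - 1) * (toDeuring α x y).1 + α =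
      α * (α + 1) / (x + y - α) * y := by
  have := sub_ne_zero.mpr hs
  simp only [toDeuring]
  field_simp
  ring

theorem onDeuringCurve_toDeuring (h : OnPCurve α x y) :
    OnDeuringCurve α (toDeuring α x y).1 (toDeuring α x y).2 := by
  have := sub_ne_zero.mpr hs
  simp only [OnPCurve] at h
  simp only [OnDeuringCurve, toDeuring]
  field_simp
  linear_combination (-α ^ 2 * (α + 1) ^ 2) * h

theorem ofDeuring_toDeuring (hX : (toDeuring α x y).1 ≠ α) :
    ofDeuring α (toDeuring α x y).1 (toDeuring α x y).2 = (x, y) := by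
  have hc : α * (α + 1) / (x + y - α) ≠ 0 := by
    rwa [← toDeuring_fst_sub_self hs, sub_ne_zero]
  simp only [ofDeuring, toDeuring_fst_sub_self hs, toDeuring_fst_sub_snd hs,
    toDeuring_snd_add hs, mul_div_cancel_left₀ _ hc]

end toDeuring

section ofDeuring

variable (hX : X ≠ α)
include hX

theorem ofDeuring_fst_add_snd_sub_self :
    (ofDeuring α X Y).1 + (ofDeuring α X Y).2 - α = α * (α + 1) / (X - α) := by
  have := sub_ne_zero.mpr hX
  simp only [ofDeuring]
  field_simp
  ring

theorem mul_ofDeuring_fst_add_snd_add_one :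
    α * ((ofDeuring α X Y).1 + (ofDeuring α X Y).2 + 1) = α * (α + 1) / (X - α) * X := by
  have := sub_ne_zero.mpr hX
  simp only [ofDeuring]
  field_simp
  ring

theorem mul_neg_mul_ofDeuring_fst_add_snd_add_one :
    α * (-α * (ofDeuring α X Y).1 + (ofDeuring α X Y).2 + 1) =
      α * (α + 1) / (X - α) * Y := by
  have := sub_ne_zero.mpr hX
  simp only [ofDeuring]
  field_simp
  ring

theorem onPCurve_ofDeuring (h : OnDeuringCurve α X Y) :
    OnPCurve α (ofDeuring α X Y).1 (ofDeuring α X Y).2 := by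
  have := sub_ne_zero.mpr hX
  simp only [OnDeuringCurve] at h
  simp only [OnPCurve, ofDeuring]
  field_simp
  linear_combination (-(α ^ 2 + α)) * h

theorem toDeuring_ofDeuring (hs : (ofDeuring α X Y).1 + (ofDeuring α X Y).2 ≠ α) :
    toDeuring α (ofDeuring α X Y).1 (ofDeuring α X Y).2 = (X, Y) := by
  have hc : α * (α + 1) / (X - α) ≠ 0 := by
    rwa [← ofDeuring_fst_add_snd_sub_self hX, sub_ne_zero]
  simp only [toDeuring, ofDeuring_fst_add_snd_sub_self hX, mul_ofDeuring_fst_add_snd_add_one hX,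
    mul_neg_mul_ofDeuring_fst_add_snd_add_one hX, mul_div_cancel_left₀ _ hc]

end ofDeuring

end DeuringForm

open DeuringForm in
theorem birational_maps_general (α : ℚ) :
    (∀ x y : ℚ, (x + 1) * (y + 1) * (x + y) = α * x * y → x + y ≠ α →
      let X := α * (x + y + 1) / (x + y - α)
      let Y := α * (-α * x + y + 1) / (x + y - α)
      Y ^ 2 + (α - 2) * X * Y + α * Y = X ^ 3 ∧
        (X ≠ α → (X - Y) / (X - α) = x ∧ (Y + (α - 1) * X + α) / (X - α) = y)) ∧
    (∀ X Y : ℚ, Y ^ 2 + (α - 2) * X * Y + α * Y = X ^ 3 → X ≠ α →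
      let x := (X - Y) / (X - α)
      let y := (Y + (α - 1) * X + α) / (X - α)
      (x + 1) * (y + 1) * (x + y) = α * x * y ∧
        (x + y ≠ α →
          α * (x + y + 1) / (x + y - α) = X ∧ α * (-α * x + y + 1) / (x + y - α) = Y)) :=
  ⟨fun _ _ h hs => ⟨onDeuringCurve_toDeuring hs h,
      fun hX => Prod.ext_iff.mp (ofDeuring_toDeuring hs hX)⟩,
    fun _ _ h hX => ⟨onPCurve_ofDeuring hX h,
      fun hs => Prod.ext_iff.mp (toDeuring_ofDeuring hX hs)⟩⟩

/-- The rational maps `X(x,y) = α(x+y+1)/(x+y−α)`, `Y(x,y) = α(−αx+y+1)/(x+y−α)` and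
`x(X,Y) = (X−Y)/(X−α)`, `y(X,Y) = (Y+(α−1)X+α)/(X−α)` are mutually inverse birational maps
between the curve `(x+1)(y+1)(x+y) = αxy` and the Deuring curve `Y² + (α−2)XY + αY = X³`,
i.e. each map sends one curve to the other and the compositions are the identity wherever
defined. -/
theorem birational_maps (α : ℚ) (hα0 : α ≠ 0) (hα1 : α ≠ -1) :
    (∀ x y : ℚ, (x + 1) * (y + 1) * (x + y) = α * x * y → x + y ≠ α →
      let X := α * (x + y + 1) / (x + y - α)
      let Y := α * (-α * x + y + 1) / (x + y - α)
      Y ^ 2 + (α - 2) * X * Y + α * Y = X ^ 3 ∧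
        (X ≠ α → (X - Y) / (X - α) = x ∧ (Y + (α - 1) * X + α) / (X - α) = y)) ∧
    (∀ X Y : ℚ, Y ^ 2 + (α - 2) * X * Y + α * Y = X ^ 3 → X ≠ α →
      let x := (X - Y) / (X - α)
      let y := (Y + (α - 1) * X + α) / (X - α)
      (x + 1) * (y + 1) * (x + y) = α * x * y ∧
        (x + y ≠ α →
          α * (x + y + 1) / (x + y - α) = X ∧ α * (-α * x + y + 1) / (x + y - α) = Y)) :=
  birational_maps_general α
end

section
/- On the elliptic curve E_α : Y² + (α−2)XY + αY = X³ with the rational functions x = (X−Y)/(X−α) and y = (Y+(α−1)X+α)/(X−α), the divisors are (x) = (2P)+(3P)−(5P)−(O) and (y) = −(P)+(3P)+(4P)−(O), where P = (α,α) generates the 6-torsion. -/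
/-! Both functions are chord functions `(Y − L(X))/(X − x₃)`: `L` is the line through two points
`P₁, P₂` of `E_α` (`2P, 3P` for `x`, `3P, 4P` for `y`), it meets `E_α` a third time at
`−(P₁ + P₂)`, and `X − x₃` vanishes at `±(P₁ + P₂)`. So the divisor is
`(P₁) + (P₂) − (P₁ + P₂) − (O)`, which in ideal form is `XYIdeal_mul_XYIdeal`. -/

open WeierstrassCurve WeierstrassCurve.Affine WeierstrassCurve.Affine.CoordinateRing Polynomial

open scoped nonZeroDivisors

namespace FractionalIdeal

variable {R K : Type*} [CommRing R] [IsDomain R] [Field K] [Algebra R K] [IsFractionRing R K]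

theorem spanSingleton_neg (x : K) : spanSingleton R⁰ (-x) = spanSingleton R⁰ x :=
  spanSingleton_eq_spanSingleton.mpr ⟨-1, by simp⟩

theorem spanSingleton_div_mul_coeIdeal_eq_coeIdeal {n d : R} (hd : d ≠ 0) {I J : Ideal R}
    (h : Ideal.span {d} * J = Ideal.span {n} * I) :
    spanSingleton R⁰ (algebraMap R K n / algebraMap R K d) * I = J := by
  rw [← IsFractionRing.mk'_eq_div (s := ⟨d, mem_nonZeroDivisors_of_ne_zero hd⟩),
    mk'_mul_coeIdeal_eq_coeIdeal, h]

end FractionalIdeal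

namespace WeierstrassCurve.Affine.CoordinateRing

variable {F : Type*} [Field F] {W : WeierstrassCurve.Affine F}

theorem spanSingleton_YClass_div_XClass_mul_XYIdeal {x₁ x₂ y₁ y₂ ℓ x₃ y₃ : F}
    (h₁ : W.Equation x₁ y₁) (h₂ : W.Equation x₂ y₂) (hx : x₁ ≠ x₂)
    (hℓ : ℓ = (y₁ - y₂) / (x₁ - x₂)) (hx₃ : W.addX x₁ x₂ ℓ = x₃)
    (hy₃ : W.addY x₁ x₂ y₁ ℓ = y₃) :
    FractionalIdeal.spanSingleton W.CoordinateRing⁰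
        (algebraMap W.CoordinateRing W.FunctionField (YClass W (linePolynomial x₁ y₁ ℓ)) /
          algebraMap W.CoordinateRing W.FunctionField (XClass W x₃)) *
        (XYIdeal W x₃ (C y₃) : FractionalIdeal W.CoordinateRing⁰ W.FunctionField) =
      XYIdeal W x₁ (C y₁) * XYIdeal W x₂ (C y₂) := by
  classical
  have key := XYIdeal_mul_XYIdeal h₁ h₂ fun h => hx h.1
  rw [slope_of_X_ne hx, ← hℓ, hx₃, hy₃] at key
  rw [← FractionalIdeal.coeIdeal_mul]
  exact FractionalIdeal.spanSingleton_div_mul_coeIdeal_eq_coeIdeal (XClass_ne_zero x₃) key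

end WeierstrassCurve.Affine.CoordinateRing

/-- Divisors are encoded by fractional ideals of the affine coordinate ring, `M_Q` being the
maximal ideal of the affine point `Q`: `(x)·M_{5P} = M_{2P}·M_{3P}` and `(y)·M_P = M_{3P}·M_{4P}`.
The multiplicity at `O` is then forced, a principal divisor having degree zero. -/
theorem divisors_of_x_and_y_general (α : ℚ)
    (W : WeierstrassCurve.Affine ℚ)
    (hW : W = { a₁ := α - 2, a₂ := 0, a₃ := α, a₄ := 0, a₆ := 0 }) :
    (FractionalIdeal.spanSingleton (nonZeroDivisors W.CoordinateRing)
        ((algebraMap W.CoordinateRing (FractionRing W.CoordinateRing)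
            (WeierstrassCurve.Affine.CoordinateRing.mk W
              ((C (X : ℚ[X]) - X : Polynomial (Polynomial ℚ))))) /
          (algebraMap W.CoordinateRing (FractionRing W.CoordinateRing)
            (WeierstrassCurve.Affine.CoordinateRing.mk W
              ((C ((X : ℚ[X]) - C α) : Polynomial (Polynomial ℚ)))))) *
        (XYIdeal W α (C (-α ^ 2)) :
          FractionalIdeal (nonZeroDivisors W.CoordinateRing) (FractionRing W.CoordinateRing)) =
      (XYIdeal W 0 (C 0) :
          FractionalIdeal (nonZeroDivisors W.CoordinateRing) (FractionRing W.CoordinateRing)) *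
        (XYIdeal W (-1) (C (-1)) :
          FractionalIdeal (nonZeroDivisors W.CoordinateRing) (FractionRing W.CoordinateRing))) ∧
    (FractionalIdeal.spanSingleton (nonZeroDivisors W.CoordinateRing)
        ((algebraMap W.CoordinateRing (FractionRing W.CoordinateRing)
            (WeierstrassCurve.Affine.CoordinateRing.mk W
              ((X + C (C (α - 1) * X + C α) : Polynomial (Polynomial ℚ))))) /
          (algebraMap W.CoordinateRing (FractionRing W.CoordinateRing)
            (WeierstrassCurve.Affine.CoordinateRing.mk W
              ((C ((X : ℚ[X]) - C α) : Polynomial (Polynomial ℚ)))))) *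
        (XYIdeal W α (C α) :
          FractionalIdeal (nonZeroDivisors W.CoordinateRing) (FractionRing W.CoordinateRing)) =
      (XYIdeal W (-1) (C (-1)) :
          FractionalIdeal (nonZeroDivisors W.CoordinateRing) (FractionRing W.CoordinateRing)) *
        (XYIdeal W 0 (C (-α)) :
          FractionalIdeal (nonZeroDivisors W.CoordinateRing) (FractionRing W.CoordinateRing))) := by
  have h2P : W.Equation 0 0 := by rw [equation_iff, hW]; simp
  have h3P : W.Equation (-1) (-1) := by rw [equation_iff, hW]; simp; ring
  have h4P : W.Equation 0 (-α) := by rw [equation_iff, hW]; simp; ring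
  refine ⟨?_, ?_⟩
  · have hx : CoordinateRing.mk W (C X - X) = -YClass W (linePolynomial 0 0 1) := by
      rw [YClass, ← map_neg, neg_sub, linePolynomial]; simp
    rw [hx, map_neg, neg_div, FractionalIdeal.spanSingleton_neg]
    exact spanSingleton_YClass_div_XClass_mul_XYIdeal h2P h3P (by norm_num) (by norm_num)
      (by simp [hW]; ring) (by simp [addY, negAddY, negY, hW]; ring)
  · have hy : CoordinateRing.mk W (X + C (C (α - 1) * X + C α)) =
        YClass W (linePolynomial (-1) (-1) (1 - α)) := by
      have hline : (C (1 - α) * (X - C (-1)) + C (-1) : ℚ[X]) = -(C (α - 1) * X + C α) := by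
        simp only [C_sub, C_neg, C_1]; ring
      rw [YClass, linePolynomial, hline, map_neg, sub_neg_eq_add]
    rw [hy]
    exact spanSingleton_YClass_div_XClass_mul_XYIdeal h3P h4P (by norm_num) (by ring)
      (by simp [hW]; ring) (by simp [addY, negAddY, negY, hW]; ring)

/-- On `E_α : Y² + (α−2)XY + αY = X³` with `x = (X−Y)/(X−α)` and `y = (Y+(α−1)X+α)/(X−α)`,
the divisors are `(x) = (2P)+(3P)−(5P)−(O)` and `(y) = −(P)+(3P)+(4P)−(O)`, where
`P = (α,α)`, `2P = (0,0)`, `3P = (−1,−1)`, `4P = (0,−α)`, `5P = (α,−α²)`.  Formulated as an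
identity of fractional ideals of the affine coordinate ring (the contribution at the point at
infinity `O` being accounted for by degrees): `(x)·M_{5P} = M_{2P}·M_{3P}` and
`(y)·M_P = M_{3P}·M_{4P}`, where `M_Q` is the maximal ideal of the affine point `Q`. -/
theorem divisors_of_x_and_y (α : ℚ) (hα0 : α ≠ 0) (hα1 : α ≠ -1)
    (W : WeierstrassCurve.Affine ℚ)
    (hW : W = { a₁ := α - 2, a₂ := 0, a₃ := α, a₄ := 0, a₆ := 0 }) :
    (FractionalIdeal.spanSingleton (nonZeroDivisors W.CoordinateRing)
        ((algebraMap W.CoordinateRing (FractionRing W.CoordinateRing)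
            (WeierstrassCurve.Affine.CoordinateRing.mk W
              ((C (X : ℚ[X]) - X : Polynomial (Polynomial ℚ))))) /
          (algebraMap W.CoordinateRing (FractionRing W.CoordinateRing)
            (WeierstrassCurve.Affine.CoordinateRing.mk W
              ((C ((X : ℚ[X]) - C α) : Polynomial (Polynomial ℚ)))))) *
        (XYIdeal W α (C (-α ^ 2)) :
          FractionalIdeal (nonZeroDivisors W.CoordinateRing) (FractionRing W.CoordinateRing)) =
      (XYIdeal W 0 (C 0) :
          FractionalIdeal (nonZeroDivisors W.CoordinateRing) (FractionRing W.CoordinateRing)) *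
        (XYIdeal W (-1) (C (-1)) :
          FractionalIdeal (nonZeroDivisors W.CoordinateRing) (FractionRing W.CoordinateRing))) ∧
    (FractionalIdeal.spanSingleton (nonZeroDivisors W.CoordinateRing)
        ((algebraMap W.CoordinateRing (FractionRing W.CoordinateRing)
            (WeierstrassCurve.Affine.CoordinateRing.mk W
              ((X + C (C (α - 1) * X + C α) : Polynomial (Polynomial ℚ))))) /
          (algebraMap W.CoordinateRing (FractionRing W.CoordinateRing)
            (WeierstrassCurve.Affine.CoordinateRing.mk W
              ((C ((X : ℚ[X]) - C α) : Polynomial (Polynomial ℚ)))))) *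
        (XYIdeal W α (C α) :
          FractionalIdeal (nonZeroDivisors W.CoordinateRing) (FractionRing W.CoordinateRing)) =
      (XYIdeal W (-1) (C (-1)) :
          FractionalIdeal (nonZeroDivisors W.CoordinateRing) (FractionRing W.CoordinateRing)) *
        (XYIdeal W 0 (C (-α)) :
          FractionalIdeal (nonZeroDivisors W.CoordinateRing) (FractionRing W.CoordinateRing))) :=
  divisors_of_x_and_y_general α W hW
end

section
/- With a(Z₁,Y₁) = ((−Z₁²−6Z₁−1)Y₁+(4α+2)Z₁³+14Z₁²+(−4α+14)Z₁+2) / ((Z₁−1)((−Z₁−1)Y₁+(2α+1)Z₁²+(−2α+6)Z₁+1)) and b(Z₁,Y₁) = (Z₁−1)² / ((−Z₁−1)Y₁+(2α+1)Z₁²+(−2α+6)Z₁+1), and x₁(X₁,Y₁) = (X₁+1)/(X₁−1), y₁(X₁,Y₁) = (2X₁Y₁−(2α+1)X₁⁴+(2α−6)X₁²−1)/(X₁−1)⁴, the identity a(X₁²,Y₁)·x₁(X₁,Y₁) + b(X₁²,Y₁)·y₁(X₁,Y₁) = 1 holds on the curve C_α : Y₁² = h₁(X₁²). -/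
/-! Since `Z₁ - 1 = (X₁ - 1)(X₁ + 1)` at `Z₁ = X₁²`, both products `a·x₁` and `b·y₁` have
denominator `(X₁ - 1)² D`, where `D` is the denominator of `b`; the claim thus reduces to a
polynomial identity between the numerators, which is linear in `Y₁`. -/

section Bosman

variable {R : Type*} [CommRing R]

def aNum (α Z Y : R) : R :=
  (-Z ^ 2 - 6 * Z - 1) * Y + (4 * α + 2) * Z ^ 3 + 14 * Z ^ 2 + (-4 * α + 14) * Z + 2

def bDen (α Z Y : R) : R :=
  (-Z - 1) * Y + (2 * α + 1) * Z ^ 2 + (-2 * α + 6) * Z + 1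

def yNum (α X Y : R) : R :=
  2 * X * Y - (2 * α + 1) * X ^ 4 + (2 * α - 6) * X ^ 2 - 1

theorem aNum_add_sq_mul_yNum (α X Y : R) :
    aNum α (X ^ 2) Y + (X + 1) ^ 2 * yNum α X Y = (X - 1) ^ 2 * bDen α (X ^ 2) Y := by
  unfold aNum bDen yNum
  ring

end Bosman

theorem div_mul_add_div_mul_eq_one {K : Type*} [Field K] {X P Q D : K} (hm : X - 1 ≠ 0)
    (hp : X + 1 ≠ 0) (hD : D ≠ 0) (h : P + (X + 1) ^ 2 * Q = (X - 1) ^ 2 * D) :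
    P / ((X ^ 2 - 1) * D) * ((X + 1) / (X - 1)) + (X ^ 2 - 1) ^ 2 / D * (Q / (X - 1) ^ 4) = 1 := by
  rw [show X ^ 2 - 1 = (X - 1) * (X + 1) by ring]
  field_simp
  exact h

theorem a_x_plus_b_y_eq_one_general (α X₁ Y₁ : ℝ)
    (hX1 : X₁ ≠ 1) (hX1' : X₁ ≠ -1)
    (hden : (-(X₁ ^ 2) - 1) * Y₁ + (2 * α + 1) * (X₁ ^ 2) ^ 2 + (-2 * α + 6) * X₁ ^ 2 + 1 ≠ 0) :
    (((-(X₁ ^ 2) ^ 2 - 6 * X₁ ^ 2 - 1) * Y₁ + (4 * α + 2) * (X₁ ^ 2) ^ 3 + 14 * (X₁ ^ 2) ^ 2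
          + (-4 * α + 14) * X₁ ^ 2 + 2) /
        ((X₁ ^ 2 - 1) * ((-(X₁ ^ 2) - 1) * Y₁ + (2 * α + 1) * (X₁ ^ 2) ^ 2
          + (-2 * α + 6) * X₁ ^ 2 + 1))) * ((X₁ + 1) / (X₁ - 1))
      + ((X₁ ^ 2 - 1) ^ 2 /
          ((-(X₁ ^ 2) - 1) * Y₁ + (2 * α + 1) * (X₁ ^ 2) ^ 2 + (-2 * α + 6) * X₁ ^ 2 + 1)) *
        ((2 * X₁ * Y₁ - (2 * α + 1) * X₁ ^ 4 + (2 * α - 6) * X₁ ^ 2 - 1) / (X₁ - 1) ^ 4)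
      = 1 :=
  div_mul_add_div_mul_eq_one (sub_ne_zero.mpr hX1) (by rwa [← sub_neg_eq_add, sub_ne_zero]) hden
    (aNum_add_sq_mul_yNum α X₁ Y₁)

/-- With `a`, `b`, `x₁`, `y₁` as in Bosman's construction, the identity
`a(X₁²,Y₁)·x₁(X₁,Y₁) + b(X₁²,Y₁)·y₁(X₁,Y₁) = 1` holds on the curve
`C_α : Y₁² = h₁(X₁²)` where
`h₁(Z₁) = (α²+α)Z₁³+(−2α²+5α+4)Z₁²+(α²−5α+8)Z₁−α+4`. -/
theorem a_x_plus_b_y_eq_one (α X₁ Y₁ : ℝ)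
    (hcurve : Y₁ ^ 2 = (α ^ 2 + α) * (X₁ ^ 2) ^ 3 + (-2 * α ^ 2 + 5 * α + 4) * (X₁ ^ 2) ^ 2
      + (α ^ 2 - 5 * α + 8) * X₁ ^ 2 - α + 4)
    (hX1 : X₁ ≠ 1) (hX1' : X₁ ≠ -1)
    (hden : (-(X₁ ^ 2) - 1) * Y₁ + (2 * α + 1) * (X₁ ^ 2) ^ 2 + (-2 * α + 6) * X₁ ^ 2 + 1 ≠ 0) :
    (((-(X₁ ^ 2) ^ 2 - 6 * X₁ ^ 2 - 1) * Y₁ + (4 * α + 2) * (X₁ ^ 2) ^ 3 + 14 * (X₁ ^ 2) ^ 2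
          + (-4 * α + 14) * X₁ ^ 2 + 2) /
        ((X₁ ^ 2 - 1) * ((-(X₁ ^ 2) - 1) * Y₁ + (2 * α + 1) * (X₁ ^ 2) ^ 2
          + (-2 * α + 6) * X₁ ^ 2 + 1))) * ((X₁ + 1) / (X₁ - 1))
      + ((X₁ ^ 2 - 1) ^ 2 /
          ((-(X₁ ^ 2) - 1) * Y₁ + (2 * α + 1) * (X₁ ^ 2) ^ 2 + (-2 * α + 6) * X₁ ^ 2 + 1)) *
        ((2 * X₁ * Y₁ - (2 * α + 1) * X₁ ^ 4 + (2 * α - 6) * X₁ ^ 2 - 1) / (X₁ - 1) ^ 4)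
      = 1 :=
  a_x_plus_b_y_eq_one_general α X₁ Y₁ hX1 hX1' hden
end

section
/- Let α be real with α²−16α+32 > 0 and α²−10α+9 > 0. Then the points U± = ( α(−α±√(α²−16α+32))/8 , α²(α−8∓√(α²−16α+32))/16 ) and V± = ( (−α²+4α−3±(α+1)√(α²−10α+9))/8 , (α³−7α²−α−9∓(α²−2α−3)√(α²−10α+9))/16 ) lie on E_α : Y²+(α−2)XY+αY = X³, and U₊ + U₋ = P and V₊ + V₋ = 2P where P = (α,α). -/
/-!
Each pair is the residual intersection of `E_α` with a line through a known point: `U₊, U₋` lie on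
`Y = -(α/2) X - α²/2`, which meets `E_α` again at `-P = (α, -α²)`, and `V₊, V₋` lie on
`Y = -((α-3)/2) X - α`, which meets `E_α` again at `-2P = (0, -α)`. Along these lines the equation
of `E_α` factors as `(X - α) q_U(X)` resp. `X q_V(X)` with quadratic `q_U`, `q_V`, whose roots are
the `X`-coordinates of `U±` resp. `V±`; three collinear points sum to zero in the group law.
-/

open WeierstrassCurve Affine

theorem WeierstrassCurve.Affine.Point.some_add_some_of_slope {F : Type*} [Field F] [DecidableEq F]
    {W : Affine F} {x₁ y₁ x₂ y₂ x₃ y₃ ℓ : F} {h₁ : W.Nonsingular x₁ y₁}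
    {h₂ : W.Nonsingular x₂ y₂} (h₃ : W.Nonsingular x₃ y₃) (hx : x₁ ≠ x₂)
    (hℓ : y₁ - y₂ = ℓ * (x₁ - x₂)) (hx₃ : x₃ = W.addX x₁ x₂ ℓ) (hy₃ : y₃ = W.addY x₁ x₂ y₁ ℓ) :
    Point.some _ _ h₁ + Point.some _ _ h₂ = Point.some _ _ h₃ := by
  have hslope : W.slope x₁ x₂ y₁ y₂ = ℓ := by
    rw [slope_of_X_ne hx, hℓ, mul_div_cancel_right₀ _ (sub_ne_zero.mpr hx)]
  subst hx₃ hy₃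
  rw [Point.add_of_X_ne hx]
  simp only [hslope]

section CurveE

variable {F : Type*} [Field F] (α : F)

def curveE : Affine F := { a₁ := α - 2, a₂ := 0, a₃ := α, a₄ := 0, a₆ := 0 }

lemma curveE_Δ : (curveE α).Δ = α ^ 3 * (α + 1) ^ 2 * (α - 8) := by
  simp only [curveE, Δ, b₂, b₄, b₆, b₈]
  ring

lemma curveE_nonsingular_of_equation {α : F} (hα0 : α ≠ 0) (hα1 : α ≠ -1) (hα8 : α ≠ 8)
    {x y : F} (h : (curveE α).Equation x y) : (curveE α).Nonsingular x y := by
  refine (equation_iff_nonsingular_of_Δ_ne_zero ?_).mp h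
  rw [curveE_Δ]
  have hα1' : α + 1 ≠ 0 := fun h => hα1 (eq_neg_of_add_eq_zero_left h)
  exact mul_ne_zero (mul_ne_zero (pow_ne_zero 3 hα0) (pow_ne_zero 2 hα1')) (sub_ne_zero.mpr hα8)

lemma curveE_equation_self : (curveE α).Equation α α := by
  rw [equation_iff]
  simp only [curveE]
  ring

lemma curveE_equation_zero : (curveE α).Equation 0 0 := by
  rw [equation_iff]
  simp only [curveE]
  ring

variable {α} {s : F}

lemma curveE_equation_U [CharZero F] (hs : s ^ 2 = α ^ 2 - 16 * α + 32) :
    (curveE α).Equation (α * (-α + s) / 8) (α ^ 2 * (α - 8 - s) / 16) := by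
  set x := α * (-α + s) / 8
  have hq : x ^ 2 + α ^ 2 / 4 * x + α ^ 2 * (α - 2) / 4 = 0 := by
    linear_combination (α ^ 2 / 64) * hs
  rw [equation_iff]
  simp only [curveE]
  linear_combination -(x - α) * hq

lemma curveE_equation_V [CharZero F] (hs : s ^ 2 = α ^ 2 - 10 * α + 9) :
    (curveE α).Equation ((-α ^ 2 + 4 * α - 3 + (α + 1) * s) / 8)
      ((α ^ 3 - 7 * α ^ 2 - α - 9 - (α ^ 2 - 2 * α - 3) * s) / 16) := by
  set x := (-α ^ 2 + 4 * α - 3 + (α + 1) * s) / 8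
  have hq : x ^ 2 + (α - 1) * (α - 3) / 4 * x + α * (α - 1) / 2 = 0 := by
    linear_combination ((α + 1) ^ 2 / 64) * hs
  rw [equation_iff]
  simp only [curveE]
  linear_combination -x * hq

lemma curveE_add_U [CharZero F] [DecidableEq F] (hα : α ≠ 0) (hs : s ≠ 0)
    {h₁ : (curveE α).Nonsingular (α * (-α + s) / 8) (α ^ 2 * (α - 8 - s) / 16)}
    {h₂ : (curveE α).Nonsingular (α * (-α - s) / 8) (α ^ 2 * (α - 8 + s) / 16)}
    (hP : (curveE α).Nonsingular α α) :
    Point.some _ _ h₁ + Point.some _ _ h₂ = Point.some _ _ hP := by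
  refine Point.some_add_some_of_slope hP (ℓ := -α / 2) ?_ (by ring) ?_ ?_
  · intro h
    have : α * s = 0 := by linear_combination 4 * h
    simp [hα, hs] at this
  · simp only [addX, curveE]
    ring
  · simp only [addY, negAddY, negY, addX, curveE]
    ring

lemma curveE_add_V [CharZero F] [DecidableEq F] (hα : α ≠ -1) (hs : s ≠ 0)
    {h₁ : (curveE α).Nonsingular ((-α ^ 2 + 4 * α - 3 + (α + 1) * s) / 8)
      ((α ^ 3 - 7 * α ^ 2 - α - 9 - (α ^ 2 - 2 * α - 3) * s) / 16)}
    {h₂ : (curveE α).Nonsingular ((-α ^ 2 + 4 * α - 3 - (α + 1) * s) / 8)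
      ((α ^ 3 - 7 * α ^ 2 - α - 9 + (α ^ 2 - 2 * α - 3) * s) / 16)}
    (h₀ : (curveE α).Nonsingular 0 0) :
    Point.some _ _ h₁ + Point.some _ _ h₂ = Point.some _ _ h₀ := by
  refine Point.some_add_some_of_slope h₀ (ℓ := -(α - 3) / 2) ?_ (by ring) ?_ ?_
  · intro h
    have : (α + 1) * s = 0 := by linear_combination 4 * h
    simp [add_eq_zero_iff_eq_neg, hα, hs] at this
  · simp only [addX, curveE]
    ring
  · simp only [addY, negAddY, negY, addX, curveE]
    ring

end CurveE

/-- For real `α` (with `E_α` nonsingular) such that `α²−16α+32 > 0` and `α²−10α+9 > 0`,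
the points `U±` and `V±` lie on `E_α : Y²+(α−2)XY+αY = X³` and satisfy
`U₊ + U₋ = P` and `V₊ + V₋ = 2P` where `P = (α,α)` and `2P = (0,0)`. -/
theorem U_V_points (α : ℝ) (hα0 : α ≠ 0) (hα1 : α ≠ -1)
    (h16 : 0 < α ^ 2 - 16 * α + 32) (h10 : 0 < α ^ 2 - 10 * α + 9)
    (W : WeierstrassCurve.Affine ℝ)
    (hW : W = { a₁ := α - 2, a₂ := 0, a₃ := α, a₄ := 0, a₆ := 0 }) :
    ∃ (hUplus : W.Nonsingular (α * (-α + Real.sqrt (α ^ 2 - 16 * α + 32)) / 8)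
        (α ^ 2 * (α - 8 - Real.sqrt (α ^ 2 - 16 * α + 32)) / 16))
      (hUminus : W.Nonsingular (α * (-α - Real.sqrt (α ^ 2 - 16 * α + 32)) / 8)
        (α ^ 2 * (α - 8 + Real.sqrt (α ^ 2 - 16 * α + 32)) / 16))
      (hVplus : W.Nonsingular
        ((-α ^ 2 + 4 * α - 3 + (α + 1) * Real.sqrt (α ^ 2 - 10 * α + 9)) / 8)
        ((α ^ 3 - 7 * α ^ 2 - α - 9 - (α ^ 2 - 2 * α - 3) * Real.sqrt (α ^ 2 - 10 * α + 9)) / 16))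
      (hVminus : W.Nonsingular
        ((-α ^ 2 + 4 * α - 3 - (α + 1) * Real.sqrt (α ^ 2 - 10 * α + 9)) / 8)
        ((α ^ 3 - 7 * α ^ 2 - α - 9 + (α ^ 2 - 2 * α - 3) * Real.sqrt (α ^ 2 - 10 * α + 9)) / 16))
      (hP : W.Nonsingular α α) (h2P : W.Nonsingular 0 0),
      WeierstrassCurve.Affine.Point.some _ _ hUplus + WeierstrassCurve.Affine.Point.some _ _ hUminus =
        WeierstrassCurve.Affine.Point.some _ _ hP ∧
      WeierstrassCurve.Affine.Point.some _ _ hVplus + WeierstrassCurve.Affine.Point.some _ _ hVminus =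
        WeierstrassCurve.Affine.Point.some _ _ h2P := by
  subst hW
  set s := √(α ^ 2 - 16 * α + 32)
  set t := √(α ^ 2 - 10 * α + 9)
  have hs : s ^ 2 = α ^ 2 - 16 * α + 32 := Real.sq_sqrt h16.le
  have ht : t ^ 2 = α ^ 2 - 10 * α + 9 := Real.sq_sqrt h10.le
  have hα8 : α ≠ 8 := by rintro rfl; norm_num at h16
  have ns : ∀ {x y}, (curveE α).Equation x y → (curveE α).Nonsingular x y :=
    curveE_nonsingular_of_equation hα0 hα1 hα8
  have hUminus := curveE_equation_U (α := α) (s := -s) (by rwa [neg_sq])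
  have hVminus := curveE_equation_V (α := α) (s := -t) (by rwa [neg_sq])
  rw [← sub_eq_add_neg, sub_neg_eq_add] at hUminus
  rw [mul_neg, ← sub_eq_add_neg, mul_neg, sub_neg_eq_add] at hVminus
  refine ⟨ns (curveE_equation_U hs), ns hUminus, ns (curveE_equation_V ht), ns hVminus,
    ns (curveE_equation_self α), ns (curveE_equation_zero α),
    curveE_add_U hα0 (Real.sqrt_pos.mpr h16).ne' _, curveE_add_V hα1 (Real.sqrt_pos.mpr h10).ne' _⟩
end

section
/- On E_α : Y²+(α−2)XY+αY = X³, the divisor of αX+2Y+α² is (5P)+(U)+(P−U)−3(O), where 5P = (α,−α²) and U, P−U are the two points with X-coordinate α(−α±√(α²−16α+32))/8. -/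
open scoped nonZeroDivisors
open WeierstrassCurve WeierstrassCurve.Affine WeierstrassCurve.Affine.CoordinateRing Polynomial

/-!
The line through `U` and `P - U` has slope `-α/2`, and `αX + 2Y + α² = 2(Y - (-α/2 X - α²/2))`
is a unit multiple of its equation.  A line meeting the curve at two points with distinct
`X`-coordinates meets it a third time at `-(U + (P - U)) = -P = 5P`, and the ideal of the line is the
product of the ideals of the three intersection points.  In the coordinate ring this follows from
`XYIdeal_mul_XYIdeal` after cancelling the invertible ideal of the nonsingular point `P`.
-/

namespace WeierstrassCurve.Affine

variable {F : Type*} [Field F] {W : WeierstrassCurve.Affine F}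

lemma XYIdeal_mul_left_cancel {x y : F} (h : W.Nonsingular x y) {I J : Ideal W.CoordinateRing}
    (hIJ : XYIdeal W x (C y) * I = XYIdeal W x (C y) * J) : I = J := by
  have hfrac := congrArg (fun I : Ideal W.CoordinateRing =>
    (I : FractionalIdeal W.CoordinateRing⁰ W.FunctionField)) hIJ
  simp only [FractionalIdeal.coeIdeal_mul, ← XYIdeal'_eq h] at hfrac
  exact FractionalIdeal.coeIdeal_inj.mp ((XYIdeal' h).mul_right_inj.mp hfrac)

lemma YIdeal_linePolynomial_eq_mul [DecidableEq F] {x₁ x₂ y₁ y₂ : F} (h₁ : W.Equation x₁ y₁)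
    (h₂ : W.Equation x₂ y₂) (hx : x₁ ≠ x₂)
    (h₃ : W.Nonsingular (W.addX x₁ x₂ (W.slope x₁ x₂ y₁ y₂))
      (W.addY x₁ x₂ y₁ (W.slope x₁ x₂ y₁ y₂))) :
    YIdeal W (linePolynomial x₁ y₁ (W.slope x₁ x₂ y₁ y₂)) =
      XYIdeal W x₁ (C y₁) * XYIdeal W x₂ (C y₂) *
        XYIdeal W (W.addX x₁ x₂ (W.slope x₁ x₂ y₁ y₂))
          (C (W.negAddY x₁ x₂ y₁ (W.slope x₁ x₂ y₁ y₂))) := by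
  refine XYIdeal_mul_left_cancel h₃ ?_
  have hneg := XYIdeal_neg_mul h₃
  rw [addY, negY_negY] at hneg
  rw [mul_comm, ← XYIdeal_mul_XYIdeal h₁ h₂ (fun h => hx h.1), ← hneg, addY]
  ring

lemma span_mk_C_C_mul_eq_YIdeal {c : F} (hc : c ≠ 0) (p : F[X]) :
    Ideal.span {CoordinateRing.mk W (C (C c) * (X - C p))} = YIdeal W p := by
  rw [YIdeal, YClass, map_mul]
  exact Ideal.span_singleton_mul_left_unit ((isUnit_C.mpr (isUnit_C.mpr hc.isUnit)).map _) _

section Deuring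

variable [CharZero F] {α s : F}

def deuringCurve (α : F) : WeierstrassCurve.Affine F :=
  { a₁ := α - 2, a₂ := 0, a₃ := α, a₄ := 0, a₆ := 0 }

lemma deuringCurve_nonsingular (hα0 : α ≠ 0) (hα1 : α ≠ -1) :
    (deuringCurve α).Nonsingular α α := by
  rw [nonsingular_iff']
  refine ⟨by rw [equation_iff, deuringCurve]; ring, Or.inl ?_⟩
  rw [deuringCurve, show (α - 2) * α - (3 * α ^ 2 + 2 * 0 * α + 0) = -2 * α * (α + 1) by ring]
  exact mul_ne_zero (mul_ne_zero (by norm_num) hα0) (fun h => hα1 (by linear_combination h))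

lemma deuringCurve_YIdeal_eq_mul [DecidableEq F] (hα0 : α ≠ 0) (hα1 : α ≠ -1)
    (hs : s ^ 2 = α ^ 2 - 16 * α + 32) (hs0 : s ≠ 0) :
    YIdeal (deuringCurve α) (C (-α / 2) * X + C (-α ^ 2 / 2)) =
      XYIdeal (deuringCurve α) (α * (-α + s) / 8) (C (α ^ 2 * (α - 8 - s) / 16)) *
        XYIdeal (deuringCurve α) (α * (-α - s) / 8) (C (α ^ 2 * (α - 8 + s) / 16)) *
        XYIdeal (deuringCurve α) α (C (-α ^ 2)) := by
  have hU : (deuringCurve α).Equation (α * (-α + s) / 8) (α ^ 2 * (α - 8 - s) / 16) := by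
    rw [equation_iff, deuringCurve]
    linear_combination ((α ^ 4 - α ^ 3 * s + 8 * α ^ 3) / 512) * hs
  have hV : (deuringCurve α).Equation (α * (-α - s) / 8) (α ^ 2 * (α - 8 + s) / 16) := by
    rw [equation_iff, deuringCurve]
    linear_combination ((α ^ 4 + α ^ 3 * s + 8 * α ^ 3) / 512) * hs
  have hx : α * (-α + s) / 8 ≠ α * (-α - s) / 8 := by
    have : α * s ≠ 0 := mul_ne_zero hα0 hs0
    contrapose! this
    linear_combination 4 * this
  have hslope : (deuringCurve α).slope (α * (-α + s) / 8) (α * (-α - s) / 8)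
      (α ^ 2 * (α - 8 - s) / 16) (α ^ 2 * (α - 8 + s) / 16) = -α / 2 := by
    rw [slope_of_X_ne hx, div_eq_iff (sub_ne_zero.mpr hx)]
    ring
  have haddX : (deuringCurve α).addX (α * (-α + s) / 8) (α * (-α - s) / 8) (-α / 2) = α := by
    rw [addX, deuringCurve]; ring
  have hnegAddY : (deuringCurve α).negAddY (α * (-α + s) / 8) (α * (-α - s) / 8)
      (α ^ 2 * (α - 8 - s) / 16) (-α / 2) = -α ^ 2 := by
    rw [negAddY, haddX]; ring
  have haddY : (deuringCurve α).addY (α * (-α + s) / 8) (α * (-α - s) / 8)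
      (α ^ 2 * (α - 8 - s) / 16) (-α / 2) = α := by
    rw [addY, hnegAddY, negY, haddX, deuringCurve]; ring
  have hline : linePolynomial (α * (-α + s) / 8) (α ^ 2 * (α - 8 - s) / 16) (-α / 2) =
      C (-α / 2) * X + C (-α ^ 2 / 2) := by
    rw [linePolynomial, show α ^ 2 * (α - 8 - s) / 16 = -α ^ 2 / 2 + -α / 2 * (α * (-α + s) / 8)
      by ring, C_add, C_mul]
    ring
  have hP := deuringCurve_nonsingular hα0 hα1
  rw [← hline, ← hslope, YIdeal_linePolynomial_eq_mul hU hV hx (by rwa [hslope, haddX, haddY]),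
    hslope, haddX, hnegAddY]

end Deuring

end WeierstrassCurve.Affine

/-- The function has poles only at `O`, so its divisor is recorded as the factorization of the
principal ideal it generates in the affine coordinate ring into maximal ideals of affine points. -/
theorem divisor_of_line_aX_2Y_a2 (α : ℝ) (hα0 : α ≠ 0) (hα1 : α ≠ -1)
    (h16 : 0 < α ^ 2 - 16 * α + 32)
    (W : WeierstrassCurve.Affine ℝ)
    (hW : W = { a₁ := α - 2, a₂ := 0, a₃ := α, a₄ := 0, a₆ := 0 }) :
    Ideal.span {WeierstrassCurve.Affine.CoordinateRing.mk W
        ((Polynomial.C 2 * X + C (C α * X + C (α ^ 2)) : Polynomial (Polynomial ℝ)))} =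
      XYIdeal W α (C (-α ^ 2)) *
        XYIdeal W (α * (-α + Real.sqrt (α ^ 2 - 16 * α + 32)) / 8)
          (C (α ^ 2 * (α - 8 - Real.sqrt (α ^ 2 - 16 * α + 32)) / 16)) *
        XYIdeal W (α * (-α - Real.sqrt (α ^ 2 - 16 * α + 32)) / 8)
          (C (α ^ 2 * (α - 8 + Real.sqrt (α ^ 2 - 16 * α + 32)) / 16)) := by
  obtain rfl : W = deuringCurve α := hW
  have hs : √(α ^ 2 - 16 * α + 32) ^ 2 = α ^ 2 - 16 * α + 32 := Real.sq_sqrt h16.le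
  have hf : (C 2 * X + C (C α * X + C (α ^ 2)) : ℝ[X][X]) =
      C (C 2) * (X - C (C (-α / 2) * X + C (-α ^ 2 / 2))) := by
    rw [mul_sub, ← C_mul, mul_add, ← mul_assoc, ← C_mul, ← C_mul,
      show (2 : ℝ) * (-α / 2) = -α by ring, show (2 : ℝ) * (-α ^ 2 / 2) = -α ^ 2 by ring]
    simp only [map_add, map_mul, map_neg, map_ofNat]
    ring
  rw [hf, span_mk_C_C_mul_eq_YIdeal two_ne_zero,
    deuringCurve_YIdeal_eq_mul hα0 hα1 hs (Real.sqrt_pos.mpr h16).ne']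
  ring
end

section
/- For 0 < α < 8, the identity 2∫₀^{(2+α−2√(α+1))/4} dt/√(t(1−t)((α−4t)²−16t)) = ∫₀¹ ds/√(s(1−s)(α²s²+α(4−α)s+4)) holds. Note for 0 < α < 8 one needs α+1>0 which holds, and the integrands are positive on the open intervals of integration. -/
/-!
The substitution `t = ψ(s) = α²s(1 - s) / (4(αs + 1))` (the rational map behind the isogeny)
turns the quartic under the left-hand root into the one under the right-hand root:
`P(ψ(s)) = ψ'(s)² Q(s)`. On `[0, 1]` the map `ψ` vanishes at both ends, increases up to
`s₀ = (√(α + 1) - 1) / α`, where it takes the value `(2 + α - 2√(α + 1)) / 4`, and then decreases,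
so it covers the interval of the left-hand integral twice; this is the factor `2`. The bound
`α < 8` keeps `Q(s) / (s(1 - s))` away from `0`, which makes the right-hand integral converge.
-/

open Real intervalIntegral MeasureTheory Set

section Folding

variable {E : Type*} [NormedAddCommGroup E] [NormedSpace ℝ E] {ψ ψ' : ℝ → ℝ} {a b c : ℝ}

theorem setIntegral_Ioo_abs_deriv_smul_comp_of_strictMonoOn (hab : a ≤ b)
    (hcont : ContinuousOn ψ (Icc a b)) (hψ' : ∀ x ∈ Ioo a b, HasDerivAt ψ (ψ' x) x)
    (hmono : StrictMonoOn ψ (Icc a b)) (F : ℝ → E) :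
    ∫ x in Ioo a b, |ψ' x| • F (ψ x) = ∫ y in Ioo (ψ a) (ψ b), F y := by
  rw [← hcont.image_Ioo_of_strictMonoOn hab hmono,
    integral_image_eq_integral_abs_deriv_smul measurableSet_Ioo
      (fun x hx => (hψ' x hx).hasDerivWithinAt) (hmono.injOn.mono Ioo_subset_Icc_self)]

theorem setIntegral_Ioo_abs_deriv_smul_comp_of_strictAntiOn (hab : a ≤ b)
    (hcont : ContinuousOn ψ (Icc a b)) (hψ' : ∀ x ∈ Ioo a b, HasDerivAt ψ (ψ' x) x)
    (hanti : StrictAntiOn ψ (Icc a b)) (F : ℝ → E) :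
    ∫ x in Ioo a b, |ψ' x| • F (ψ x) = ∫ y in Ioo (ψ b) (ψ a), F y := by
  rw [← hcont.image_Ioo_of_strictAntiOn hab hanti,
    integral_image_eq_integral_abs_deriv_smul measurableSet_Ioo
      (fun x hx => (hψ' x hx).hasDerivWithinAt) (hanti.injOn.mono Ioo_subset_Icc_self)]

theorem setIntegral_Ioo_abs_deriv_smul_comp_of_strictMonoOn_of_strictAntiOn
    (hab : a < b) (hbc : b < c) (hcont : ContinuousOn ψ (Icc a c))
    (hψ' : ∀ x ∈ Ioo a c, HasDerivAt ψ (ψ' x) x) (hmono : StrictMonoOn ψ (Icc a b))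
    (hanti : StrictAntiOn ψ (Icc b c)) (hac : ψ a = ψ c) (F : ℝ → E)
    (hint : IntegrableOn (fun x => |ψ' x| • F (ψ x)) (Ioo a c)) :
    ∫ x in Ioo a c, |ψ' x| • F (ψ x) = (2 : ℝ) • ∫ y in Ioo (ψ a) (ψ b), F y := by
  have hleft := setIntegral_Ioo_abs_deriv_smul_comp_of_strictMonoOn hab.le
    (hcont.mono (Icc_subset_Icc_right hbc.le))
    (fun x hx => hψ' x ⟨hx.1, hx.2.trans hbc⟩) hmono F
  have hright := setIntegral_Ioo_abs_deriv_smul_comp_of_strictAntiOn hbc.le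
    (hcont.mono (Icc_subset_Icc_left hab.le))
    (fun x hx => hψ' x ⟨hab.trans hx.1, hx.2⟩) hanti F
  rw [← Ioo_union_Ico_eq_Ioo hab hbc.le, setIntegral_union
    ((Iio_disjoint_Ici le_rfl).mono Ioo_subset_Iio_self Ico_subset_Ici_self) measurableSet_Ico
    (hint.mono_set (Ioo_subset_Ioo_right hbc.le))
    (hint.mono_set (Ico_subset_Ioo_left hab)), integral_Ico_eq_integral_Ioo, hleft, hright,
    ← hac, two_smul]

end Folding

lemma integrableOn_inv_sqrt_mul_one_sub :
    IntegrableOn (fun s : ℝ => (√(s * (1 - s)))⁻¹) (Ioo 0 1) := by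
  have hsqrt : IntegrableOn (fun s : ℝ => (√s)⁻¹) (Ioo 0 1) :=
    ((integrableOn_Ioo_rpow_iff one_pos).2 (by norm_num : (-1 : ℝ) < -(1 / 2))).congr_fun
      (fun s hs => by simp only [rpow_neg hs.1.le, sqrt_eq_rpow]) measurableSet_Ioo
  have hsqrt' : IntegrableOn (fun s : ℝ => (√(1 - s))⁻¹) (Ioo 0 1) := by
    rw [← (volume.measurePreserving_sub_left (1 : ℝ)).integrableOn_comp_preimage
      (MeasurableEquiv.subLeft (1 : ℝ)).measurableEmbedding] at hsqrt
    simpa [Function.comp_def, preimage_const_sub_Ioo] using hsqrt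
  refine (hsqrt.add hsqrt').mono' (by fun_prop) ((ae_restrict_iff' measurableSet_Ioo).2
    (Filter.Eventually.of_forall fun s hs => ?_))
  have hs₀ : 0 < √s := sqrt_pos.2 hs.1
  have hs₁ : 0 < √(1 - s) := sqrt_pos.2 (sub_pos.2 hs.2)
  have hsum : 1 ≤ √s + √(1 - s) := by
    linarith [le_sqrt_self_iff.2 hs.2.le, le_sqrt_self_iff.2 (by linarith [hs.1] : 1 - s ≤ 1)]
  rw [norm_inv, norm_of_nonneg (sqrt_nonneg _), sqrt_mul hs.1.le, mul_inv]
  calc (√s)⁻¹ * (√(1 - s))⁻¹ ≤ (√s)⁻¹ * (√(1 - s))⁻¹ * (√s + √(1 - s)) :=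
        le_mul_of_one_le_right (by positivity) hsum
    _ = (√s)⁻¹ + (√(1 - s))⁻¹ := by field_simp; ring

lemma integrableOn_one_div_sqrt_mul_one_sub_mul {R : ℝ → ℝ} (hR : Measurable R) {δ : ℝ}
    (hδ : 0 < δ) (hRδ : ∀ s ∈ Ioo (0 : ℝ) 1, δ ≤ R s) :
    IntegrableOn (fun s => 1 / √(s * (1 - s) * R s)) (Ioo 0 1) := by
  refine (integrableOn_inv_sqrt_mul_one_sub.mul_const (√δ)⁻¹).mono'
    (Measurable.aestronglyMeasurable (by fun_prop))
    ((ae_restrict_iff' measurableSet_Ioo).2 (Filter.Eventually.of_forall fun s hs => ?_))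
  rw [norm_div, norm_one, norm_of_nonneg (sqrt_nonneg _), one_div,
    sqrt_mul (mul_pos hs.1 (sub_pos.2 hs.2)).le, mul_inv]
  gcongr
  exact hRδ s hs

noncomputable section

def quarticP (α t : ℝ) : ℝ := t * (1 - t) * ((α - 4 * t) ^ 2 - 16 * t)

def quarticQ (α s : ℝ) : ℝ := s * (1 - s) * (α ^ 2 * s ^ 2 + α * (4 - α) * s + 4)

def isogenyMap (α s : ℝ) : ℝ := α ^ 2 * (s * (1 - s)) / (4 * (α * s + 1))

def isogenyMapDeriv (α s : ℝ) : ℝ := α ^ 2 * (1 - 2 * s - α * s ^ 2) / (4 * (α * s + 1) ^ 2)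

def isogenyMapCriticalPoint (α : ℝ) : ℝ := (√(α + 1) - 1) / α

end

section IsogenyMap

variable {α s : ℝ}

lemma quarticP_isogenyMap (h : α * s + 1 ≠ 0) :
    quarticP α (isogenyMap α s) = isogenyMapDeriv α s ^ 2 * quarticQ α s := by
  unfold quarticP quarticQ isogenyMap isogenyMapDeriv
  field_simp
  ring

lemma hasDerivAt_isogenyMap (h : α * s + 1 ≠ 0) :
    HasDerivAt (isogenyMap α) (isogenyMapDeriv α s) s := by
  have h4 : 4 * (α * s + 1) ≠ 0 := mul_ne_zero four_ne_zero h
  refine ((((hasDerivAt_id' s).mul ((hasDerivAt_id' s).const_sub 1)).const_mul (α ^ 2)).div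
    (((hasDerivAt_id' s).const_mul α).add_const 1 |>.const_mul 4) h4).congr_deriv ?_
  simp only [isogenyMapDeriv, Pi.mul_apply]
  field_simp
  ring

lemma continuousOn_isogenyMap (hα : 0 ≤ α) : ContinuousOn (isogenyMap α) (Ici 0) := fun s hs =>
  (hasDerivAt_isogenyMap (by have := mem_Ici.1 hs; positivity)).continuousAt.continuousWithinAt

@[simp] lemma isogenyMap_zero : isogenyMap α 0 = 0 := by simp [isogenyMap]

@[simp] lemma isogenyMap_one : isogenyMap α 1 = 0 := by simp [isogenyMap]

lemma mul_isogenyMapCriticalPoint (hα : 0 < α) :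
    α * isogenyMapCriticalPoint α = √(α + 1) - 1 := by
  unfold isogenyMapCriticalPoint
  field_simp

lemma isogenyMapCriticalPoint_pos (hα : 0 < α) : 0 < isogenyMapCriticalPoint α :=
  div_pos (by rw [sub_pos, lt_sqrt zero_le_one]; linarith) hα

lemma isogenyMapCriticalPoint_lt_one (hα : 0 < α) : isogenyMapCriticalPoint α < 1 := by
  rw [isogenyMapCriticalPoint, div_lt_one hα, sub_lt_iff_lt_add, sqrt_lt' (by linarith)]
  nlinarith

lemma isogenyMapCriticalPoint_quadratic (hα : 0 < α) :
    α * isogenyMapCriticalPoint α ^ 2 + 2 * isogenyMapCriticalPoint α = 1 := by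
  have hs := mul_isogenyMapCriticalPoint hα
  refine mul_left_cancel₀ hα.ne' ?_
  linear_combination (α * isogenyMapCriticalPoint α + √(α + 1) + 1) * hs +
    sq_sqrt (by linarith : 0 ≤ α + 1)

lemma isogenyMap_isogenyMapCriticalPoint (hα : 0 < α) :
    isogenyMap α (isogenyMapCriticalPoint α) = (2 + α - 2 * √(α + 1)) / 4 := by
  have hq := sq_sqrt (by linarith : 0 ≤ α + 1)
  have hq₀ : 0 < √(α + 1) := sqrt_pos.2 (by linarith)
  unfold isogenyMap
  rw [show α ^ 2 * (isogenyMapCriticalPoint α * (1 - isogenyMapCriticalPoint α)) =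
    α * isogenyMapCriticalPoint α * (α - α * isogenyMapCriticalPoint α) by ring,
    mul_isogenyMapCriticalPoint hα, sub_add_cancel,
    show α - (√(α + 1) - 1) = √(α + 1) * (√(α + 1) - 1) by linear_combination -hq]
  field_simp
  linear_combination hq

lemma isogenyMapDeriv_eq (hα : 0 < α) (s : ℝ) :
    isogenyMapDeriv α s = α ^ 2 * ((isogenyMapCriticalPoint α - s) *
      (α * (isogenyMapCriticalPoint α + s) + 2)) / (4 * (α * s + 1) ^ 2) := by
  rw [isogenyMapDeriv, show 1 - 2 * s - α * s ^ 2 = (isogenyMapCriticalPoint α - s) *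
    (α * (isogenyMapCriticalPoint α + s) + 2) by
      linear_combination -isogenyMapCriticalPoint_quadratic hα]

lemma strictMonoOn_isogenyMap (hα : 0 < α) :
    StrictMonoOn (isogenyMap α) (Icc 0 (isogenyMapCriticalPoint α)) := by
  refine strictMonoOn_of_deriv_pos (convex_Icc _ _)
    ((continuousOn_isogenyMap hα.le).mono Icc_subset_Ici_self) fun s hs => ?_
  rw [interior_Icc] at hs
  have hs₀ := hs.1
  rw [(hasDerivAt_isogenyMap (by positivity)).deriv, isogenyMapDeriv_eq hα]
  have hgap := sub_pos.2 hs.2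
  have hc := isogenyMapCriticalPoint_pos hα
  positivity

lemma strictAntiOn_isogenyMap (hα : 0 < α) :
    StrictAntiOn (isogenyMap α) (Ici (isogenyMapCriticalPoint α)) := by
  have hc := isogenyMapCriticalPoint_pos hα
  refine strictAntiOn_of_deriv_neg (convex_Ici _)
    ((continuousOn_isogenyMap hα.le).mono (Ici_subset_Ici.2 hc.le)) fun s hs => ?_
  rw [interior_Ici] at hs
  have hs₀ : 0 < s := hc.trans hs
  rw [(hasDerivAt_isogenyMap (by positivity)).deriv, isogenyMapDeriv_eq hα]
  exact div_neg_of_neg_of_pos (mul_neg_of_pos_of_neg (by positivity)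
    (mul_neg_of_neg_of_pos (sub_neg.2 hs) (by positivity))) (by positivity)

lemma abs_isogenyMapDeriv_mul_one_div_sqrt_quarticP (h : α * s + 1 ≠ 0)
    (h' : isogenyMapDeriv α s ≠ 0) :
    |isogenyMapDeriv α s| * (1 / √(quarticP α (isogenyMap α s))) = 1 / √(quarticQ α s) := by
  rw [quarticP_isogenyMap h, ← sq_abs, sqrt_mul (sq_nonneg _), sqrt_sq (abs_nonneg _)]
  field_simp [abs_ne_zero.2 h']

lemma one_div_sqrt_quarticQ_ae_eq (hα : 0 < α) :
    (fun s => 1 / √(quarticQ α s)) =ᵐ[volume.restrict (Ioi 0)]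
      fun s => |isogenyMapDeriv α s| * (1 / √(quarticP α (isogenyMap α s))) := by
  filter_upwards [ae_restrict_mem measurableSet_Ioi,
    ae_restrict_of_ae (volume.ae_ne (isogenyMapCriticalPoint α))] with s hs hs'
  have hs₀ : 0 < s := hs
  have hc := isogenyMapCriticalPoint_pos hα
  refine (abs_isogenyMapDeriv_mul_one_div_sqrt_quarticP (by positivity) ?_).symm
  rw [isogenyMapDeriv_eq hα]
  exact div_ne_zero (mul_ne_zero (by positivity)
    (mul_ne_zero (sub_ne_zero.2 hs'.symm) (by positivity))) (by positivity)

lemma integrableOn_one_div_sqrt_quarticQ (hα₀ : 0 < α) (hα₈ : α < 8) :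
    IntegrableOn (fun s => 1 / √(quarticQ α s)) (Ioo 0 1) :=
  integrableOn_one_div_sqrt_mul_one_sub_mul (by fun_prop)
    (by nlinarith : 0 < α * (8 - α) / 4) fun s _ => by nlinarith [sq_nonneg (2 * α * s + 4 - α)]

end IsogenyMap

/-- For `0 < α < 8`,
`2∫₀^{(2+α−2√(α+1))/4} dt/√(t(1−t)((α−4t)²−16t)) = ∫₀¹ ds/√(s(1−s)(α²s²+α(4−α)s+4))`. -/
theorem period_identity_0_lt_alpha_lt_8 (α : ℝ) (h0 : 0 < α) (h8 : α < 8) :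
    2 * ∫ t in (0 : ℝ)..((2 + α - 2 * Real.sqrt (α + 1)) / 4),
        1 / Real.sqrt (t * (1 - t) * ((α - 4 * t) ^ 2 - 16 * t)) =
      ∫ s in (0 : ℝ)..1,
        1 / Real.sqrt (s * (1 - s) * (α ^ 2 * s ^ 2 + α * (4 - α) * s + 4)) := by
  have hc₀ := isogenyMapCriticalPoint_pos h0
  have hc₁ := isogenyMapCriticalPoint_lt_one h0
  have hae : (fun s => 1 / √(quarticQ α s)) =ᵐ[volume.restrict (Ioo 0 1)]
      fun s => |isogenyMapDeriv α s| * (1 / √(quarticP α (isogenyMap α s))) :=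
    ae_restrict_of_ae_restrict_of_subset Ioo_subset_Ioi_self (one_div_sqrt_quarticQ_ae_eq h0)
  have hfold := setIntegral_Ioo_abs_deriv_smul_comp_of_strictMonoOn_of_strictAntiOn hc₀ hc₁
    ((continuousOn_isogenyMap h0.le).mono Icc_subset_Ici_self)
    (fun s hs => hasDerivAt_isogenyMap (by have := hs.1; positivity))
    (strictMonoOn_isogenyMap h0) ((strictAntiOn_isogenyMap h0).mono Icc_subset_Ici_self)
    (by rw [isogenyMap_zero, isogenyMap_one]) (fun t => 1 / √(quarticP α t))
    ((integrableOn_one_div_sqrt_quarticQ h0 h8).congr_fun_ae hae)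
  rw [isogenyMap_zero, isogenyMap_isogenyMapCriticalPoint h0, smul_eq_mul] at hfold
  have hb : 0 ≤ (2 + α - 2 * √(α + 1)) / 4 := by
    nlinarith [sq_nonneg (√(α + 1) - 1), sq_sqrt (by linarith : 0 ≤ α + 1)]
  rw [integral_of_le hb, integral_of_le zero_le_one, integral_Ioc_eq_integral_Ioo,
    integral_Ioc_eq_integral_Ioo]
  exact hfold.symm.trans (integral_congr_ae hae).symm
end

section
/- For α < −1, ∫₀¹ dt/√(t(1−t)((α−4t)²−16t)) = ∫_{(−α−√(α²−8α))/4}^{1} dt/√((1−t)(2t+α−2)(2t²+αt+α)). -/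
open Real intervalIntegral

/-!
The substitution `t = φ(s) = (1 - s)(2s + α - 2) / (2(2s + α - 1))` carries the right-hand side
to the left-hand side. It is strictly decreasing on `[r, 1]`, where `r` is the lower root of
`2s² + αs + α`, with `φ r = 1` and `φ 1 = 0`, and the left-hand quartic pulls back to `φ'(s)²`
times the right-hand quartic, so `|φ'(s)|` cancels the Jacobian.
-/

open MeasureTheory Set in
theorem integral_one_div_sqrt_comp_of_deriv_neg {φ φ' f g : ℝ → ℝ} {a b : ℝ} (hab : a ≤ b)
    (hφ : ContinuousOn φ (Icc a b)) (hderiv : ∀ x ∈ Ioo a b, HasDerivAt φ (φ' x) x)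
    (hφ' : ∀ x ∈ Ioo a b, φ' x < 0) (hfg : ∀ x ∈ Ioo a b, f (φ x) = φ' x ^ 2 * g x) :
    ∫ t in φ b..φ a, 1 / √(f t) = ∫ s in a..b, 1 / √(g s) := by
  have hderiv' : ∀ x ∈ Ioo a b, HasDerivWithinAt φ (φ' x) (Ioo a b) x :=
    fun x hx => (hderiv x hx).hasDerivWithinAt
  have hanti : StrictAntiOn φ (Icc a b) :=
    strictAntiOn_of_hasDerivWithinAt_neg (convex_Icc a b) hφ (by rwa [interior_Icc])
      (by rwa [interior_Icc])
  have hba : φ b ≤ φ a := hanti.antitoneOn (left_mem_Icc.2 hab) (right_mem_Icc.2 hab) hab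
  rw [integral_of_le hba, integral_of_le hab, integral_Ioc_eq_integral_Ioo,
    integral_Ioc_eq_integral_Ioo, ← hφ.image_Ioo_of_strictAntiOn hab hanti,
    integral_image_eq_integral_abs_deriv_smul measurableSet_Ioo hderiv'
      (hanti.injOn.mono Ioo_subset_Icc_self)]
  refine setIntegral_congr_fun measurableSet_Ioo fun x hx => ?_
  have habs : |φ' x| ≠ 0 := abs_ne_zero.2 (hφ' x hx).ne
  rw [smul_eq_mul, hfg x hx, sqrt_mul (sq_nonneg _), sqrt_sq_eq_abs, one_div, mul_inv,
    mul_inv_cancel_left₀ habs, one_div]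

noncomputable def periodSubst (α s : ℝ) : ℝ := (1 - s) * (2 * s + α - 2) / (2 * (2 * s + α - 1))

noncomputable def periodSubstDeriv (α s : ℝ) : ℝ :=
  -(((2 * s + α - 1) ^ 2 - α - 1) / (2 * (2 * s + α - 1) ^ 2))

theorem hasDerivAt_periodSubst {α s : ℝ} (hs : 2 * s + α - 1 ≠ 0) :
    HasDerivAt (periodSubst α) (periodSubstDeriv α s) s := by
  have hnum : HasDerivAt (fun x : ℝ => (1 - x) * (2 * x + α - 2)) (4 - α - 4 * s) s :=
    (((hasDerivAt_id' s).const_sub 1).mul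
      ((((hasDerivAt_id' s).const_mul 2).add_const α).sub_const 2)).congr_deriv (by ring)
  have hden : HasDerivAt (fun x : ℝ => 2 * (2 * x + α - 1)) 4 s :=
    (((((hasDerivAt_id' s).const_mul 2).add_const α).sub_const 1).const_mul 2).congr_deriv
      (by ring)
  refine (hnum.div hden (mul_ne_zero two_ne_zero hs)).congr_deriv ?_
  unfold periodSubstDeriv
  field_simp
  ring

theorem periodSubstDeriv_neg {α s : ℝ} (hα : α ≤ -1) (hs : 2 * s + α - 1 ≠ 0) :
    periodSubstDeriv α s < 0 := by
  have hsq : 0 < (2 * s + α - 1) ^ 2 := by positivity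
  unfold periodSubstDeriv
  exact neg_neg_of_pos (div_pos (by linarith) (by positivity))

theorem periodSubst_one (α : ℝ) : periodSubst α 1 = 0 := by
  simp [periodSubst]

theorem periodSubst_eq_one_of_root {α r : ℝ} (hα : α ≠ -1) (hr : 2 * r ^ 2 + α * r + α = 0) :
    periodSubst α r = 1 := by
  have hden : 2 * (2 * r + α - 1) ≠ 0 := by
    intro h0
    obtain rfl : r = (1 - α) / 2 := by linarith
    exact hα (by linarith)
  rw [periodSubst, div_eq_one_iff_eq hden]
  linear_combination -hr

theorem periodSubst_pullback {α s : ℝ} (hs : 2 * s + α - 1 ≠ 0) :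
    periodSubst α s * (1 - periodSubst α s) * ((α - 4 * periodSubst α s) ^ 2 - 16 * periodSubst α s)
      = periodSubstDeriv α s ^ 2 * ((1 - s) * (2 * s + α - 2) * (2 * s ^ 2 + α * s + α)) := by
  have hs' : s * 2 + α - 1 ≠ 0 := fun h0 => hs (by linarith)
  unfold periodSubst periodSubstDeriv
  field_simp
  ring

theorem lowerRoot_isRoot {α : ℝ} (hα : α ≤ 0) :
    2 * ((-α - √(α ^ 2 - 8 * α)) / 4) ^ 2 + α * ((-α - √(α ^ 2 - 8 * α)) / 4) + α = 0 := by
  have hsq := sq_sqrt (show 0 ≤ α ^ 2 - 8 * α by nlinarith)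
  linear_combination hsq / 8

theorem lowerRoot_nonpos {α : ℝ} (hα : α ≤ 0) : (-α - √(α ^ 2 - 8 * α)) / 4 ≤ 0 := by
  have : -α ≤ √(α ^ 2 - 8 * α) := le_sqrt_of_sq_le (by nlinarith)
  linarith

/-- For `α < −1`,
`∫₀¹ dt/√(t(1−t)((α−4t)²−16t))
  = ∫_{(−α−√(α²−8α))/4}^{1} dt/√((1−t)(2t+α−2)(2t²+αt+α))`. -/
theorem period_identity_alpha_lt_neg_one (α : ℝ) (h : α < -1) :
    ∫ t in (0 : ℝ)..1, 1 / Real.sqrt (t * (1 - t) * ((α - 4 * t) ^ 2 - 16 * t)) =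
      ∫ t in ((-α - Real.sqrt (α ^ 2 - 8 * α)) / 4)..1,
        1 / Real.sqrt ((1 - t) * (2 * t + α - 2) * (2 * t ^ 2 + α * t + α)) := by
  set r := (-α - √(α ^ 2 - 8 * α)) / 4
  have hr1 : r ≤ 1 := (lowerRoot_nonpos (by linarith)).trans zero_le_one
  have hden : ∀ s ≤ 1, 2 * s + α - 1 ≠ 0 := fun s hs => by linarith
  have key := integral_one_div_sqrt_comp_of_deriv_neg
    (f := fun t => t * (1 - t) * ((α - 4 * t) ^ 2 - 16 * t))
    (g := fun s => (1 - s) * (2 * s + α - 2) * (2 * s ^ 2 + α * s + α)) hr1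
    (fun x hx => (hasDerivAt_periodSubst (hden x hx.2)).continuousAt.continuousWithinAt)
    (fun x hx => hasDerivAt_periodSubst (hden x hx.2.le))
    (fun x hx => periodSubstDeriv_neg h.le (hden x hx.2.le))
    (fun x hx => periodSubst_pullback (hden x hx.2.le))
  rwa [periodSubst_one, periodSubst_eq_one_of_root h.ne (lowerRoot_isRoot (by linarith))] at key
end

section
/- For α < −1, the involution s = (1−w)/(1+αw) transforms the integral and yields −∫_{(α−4−√(α²−8α))/(2α)}^{1} ds/√(s(1−s)(α²s²+α(4−α)s+4)) = ∫₀^{(α−4+√(α²−8α))/(2α)} dw/√(w(1−w)(α²w²+α(4−α)w+4)). -/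
/-!
The Möbius map `φ w = (1 - w) / (1 + α w)` is an involution with `φ' w = -(1 + α) / (1 + α w)²`,
and it multiplies the quartic `P s = s (1 - s) (α² s² + α (4 - α) s + 4)` by `φ'²`, so
`|φ'| / √(P ∘ φ) = 1 / √P`. For `α < -1` and `1 + α b > 0` it maps `[0, b]` bijectively onto
`[1, φ b]`, and it swaps the two roots `(α - 4 ± √(α² - 8α)) / (2α)` of the quadratic factor.
The change of variables formula for injective maps holds without any integrability assumption,
so the improper integrals need no convergence argument.
-/

open Real intervalIntegral MeasureTheory Set

noncomputable def mobiusInvolution (α w : ℝ) : ℝ := (1 - w) / (1 + α * w)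

noncomputable def quartic (α s : ℝ) : ℝ := s * (1 - s) * (α ^ 2 * s ^ 2 + α * (4 - α) * s + 4)

variable {α : ℝ}

lemma one_sub_mobiusInvolution {w : ℝ} (hw : 1 + α * w ≠ 0) :
    1 - mobiusInvolution α w = w * (1 + α) / (1 + α * w) := by
  rw [mobiusInvolution, eq_div_iff hw, sub_mul, div_mul_cancel₀ _ hw]
  ring

lemma one_add_mul_mobiusInvolution {w : ℝ} (hw : 1 + α * w ≠ 0) :
    1 + α * mobiusInvolution α w = (1 + α) / (1 + α * w) := by
  rw [mobiusInvolution, eq_div_iff hw, add_mul, mul_assoc, div_mul_cancel₀ _ hw]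
  ring

lemma mobiusInvolution_mobiusInvolution (hα : 1 + α ≠ 0) {w : ℝ} (hw : 1 + α * w ≠ 0) :
    mobiusInvolution α (mobiusInvolution α w) = w := by
  rw [mobiusInvolution, one_sub_mobiusInvolution hw, one_add_mul_mobiusInvolution hw,
    div_div_div_cancel_right₀ hw, mul_div_cancel_right₀ _ hα]

lemma hasDerivAt_mobiusInvolution {w : ℝ} (hw : 1 + α * w ≠ 0) :
    HasDerivAt (mobiusInvolution α) (-(1 + α) / (1 + α * w) ^ 2) w := by
  have hnum : HasDerivAt (fun w : ℝ => 1 - w) (-1) w := by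
    simpa using (hasDerivAt_id w).const_sub 1
  have hden : HasDerivAt (fun w : ℝ => 1 + α * w) α w := by
    simpa using ((hasDerivAt_id w).const_mul α).const_add 1
  exact (hnum.div hden hw).congr_deriv (by ring)

lemma quartic_mobiusInvolution {w : ℝ} (hw : 1 + α * w ≠ 0) :
    quartic α (mobiusInvolution α w) = (-(1 + α) / (1 + α * w) ^ 2) ^ 2 * quartic α w := by
  have hw' : 1 + w * α ≠ 0 := by rwa [mul_comm]
  unfold quartic mobiusInvolution
  field_simp
  ring

lemma abs_mul_inv_sqrt_quartic_mobiusInvolution (hα : 1 + α ≠ 0) {w : ℝ}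
    (hw : 1 + α * w ≠ 0) :
    |-(1 + α) / (1 + α * w) ^ 2| * (1 / √(quartic α (mobiusInvolution α w))) =
      1 / √(quartic α w) := by
  have hJ : |-(1 + α) / (1 + α * w) ^ 2| ≠ 0 :=
    abs_ne_zero.2 (div_ne_zero (neg_ne_zero.2 hα) (pow_ne_zero 2 hw))
  rw [quartic_mobiusInvolution hw, sqrt_mul (sq_nonneg _), sqrt_sq_eq_abs, one_div, one_div,
    mul_inv, ← mul_assoc, mul_inv_cancel₀ hJ, one_mul]

lemma bijOn_mobiusInvolution_Icc (hα : α < -1) {b : ℝ} (hαb : 0 < 1 + α * b) :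
    BijOn (mobiusInvolution α) (Icc 0 b) (Icc 1 (mobiusInvolution α b)) := by
  have hpos : ∀ w ∈ Icc 0 b, 0 < 1 + α * w := fun w hw => by nlinarith [hw.2]
  have hneg : ∀ s ∈ Icc 1 (mobiusInvolution α b), 1 + α * s < 0 := fun s hs => by
    nlinarith [hs.1]
  have hinv : InvOn (mobiusInvolution α) (mobiusInvolution α) (Icc 0 b)
      (Icc 1 (mobiusInvolution α b)) :=
    ⟨fun w hw => mobiusInvolution_mobiusInvolution (by linarith) (hpos w hw).ne',
      fun s hs => mobiusInvolution_mobiusInvolution (by linarith) (hneg s hs).ne⟩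
  refine hinv.bijOn (fun w hw => ?_) (fun s hs => ?_)
  · have hw' := hpos w hw
    unfold mobiusInvolution
    constructor
    · rw [le_div_iff₀ hw']
      nlinarith [hw.1]
    · rw [div_le_div_iff₀ hw' hαb]
      nlinarith [hw.2]
  · have hs' := hneg s hs
    have hsa := hs.2
    unfold mobiusInvolution at hsa ⊢
    rw [le_div_iff₀ hαb] at hsa
    constructor
    · exact div_nonneg_of_nonpos (by linarith [hs.1]) hs'.le
    · rw [div_le_iff_of_neg hs']
      linarith

theorem integral_inv_sqrt_quartic_mobiusInvolution (hα : α < -1) {b : ℝ} (hb : 0 ≤ b)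
    (hαb : 0 < 1 + α * b) :
    ∫ s in 1..mobiusInvolution α b, 1 / √(quartic α s) = ∫ w in 0..b, 1 / √(quartic α w) := by
  have hbij := bijOn_mobiusInvolution_Icc hα hαb
  have hpos : ∀ w ∈ Icc 0 b, 1 + α * w ≠ 0 := fun w hw => by nlinarith [hw.2]
  rw [integral_of_le (hbij.mapsTo ⟨hb, le_rfl⟩).1, integral_of_le hb,
    ← integral_Icc_eq_integral_Ioc, ← integral_Icc_eq_integral_Ioc, ← hbij.image_eq,
    integral_image_eq_integral_abs_deriv_smul measurableSet_Icc
      (fun w hw => (hasDerivAt_mobiusInvolution (hpos w hw)).hasDerivWithinAt) hbij.injOn]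
  exact setIntegral_congr_fun measurableSet_Icc fun w hw =>
    abs_mul_inv_sqrt_quartic_mobiusInvolution (by linarith) (hpos w hw)

lemma one_add_mul_quadratic_root (hα : α ≠ 0) (d : ℝ) :
    1 + α * ((α - 4 + d) / (2 * α)) = (α - 2 + d) / 2 := by
  field_simp
  ring

lemma mobiusInvolution_quadratic_root (hα : α ≠ 0) {d : ℝ} (hd : d ^ 2 = α ^ 2 - 8 * α)
    (hd' : α - 2 + d ≠ 0) :
    mobiusInvolution α ((α - 4 + d) / (2 * α)) = (α - 4 - d) / (2 * α) := by
  rw [mobiusInvolution, one_add_mul_quadratic_root hα, div_eq_iff (by simpa using hd')]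
  field_simp
  linear_combination hd

/-- For `α < −1`, the involution `s = (1−w)/(1+αw)` yields
`−∫_{(α−4−√(α²−8α))/(2α)}^{1} ds/√(s(1−s)(α²s²+α(4−α)s+4))
  = ∫₀^{(α−4+√(α²−8α))/(2α)} dw/√(w(1−w)(α²w²+α(4−α)w+4))`. -/
theorem involution_identity (α : ℝ) (h : α < -1) :
    -∫ s in ((α - 4 - Real.sqrt (α ^ 2 - 8 * α)) / (2 * α))..1,
        1 / Real.sqrt (s * (1 - s) * (α ^ 2 * s ^ 2 + α * (4 - α) * s + 4)) =
      ∫ w in (0 : ℝ)..((α - 4 + Real.sqrt (α ^ 2 - 8 * α)) / (2 * α)),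
        1 / Real.sqrt (w * (1 - w) * (α ^ 2 * w ^ 2 + α * (4 - α) * w + 4)) := by
  have hα : α ≠ 0 := by linarith
  set d := √(α ^ 2 - 8 * α)
  have hd : d ^ 2 = α ^ 2 - 8 * α := sq_sqrt (by nlinarith)
  have hd_lo : 2 - α < d := lt_sqrt_of_sq_lt (by nlinarith)
  have hd_hi : d ≤ 4 - α := sqrt_le_iff.2 ⟨by linarith, by nlinarith⟩
  rw [integral_symm, neg_neg, ← mobiusInvolution_quadratic_root hα hd (by linarith)]
  apply integral_inv_sqrt_quartic_mobiusInvolution h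
  · exact div_nonneg_of_nonpos (by linarith) (by linarith)
  · rw [one_add_mul_quadratic_root hα]
    linarith
end

section
/- For α < −1, the substitution u = v − (α²/4 − α − 2) + (α+1)/v yields ∫₀^∞ du/√(u(u²+2(α²/4−α−2)u+(α³/16)(α−8))) = ∫_{(α²−4α−8−α√(α²−8α))/8}^∞ dv/√(v(v²−(α²/4−α−2)v+α+1)). -/
open Real MeasureTheory
open Set Filter Topology

/-- For `α < −1`, the substitution `u = v − (α²/4 − α − 2) + (α+1)/v` (the standard
2-isogeny) yields
`∫₀^∞ du/√(u(u²+2(α²/4−α−2)u+(α³/16)(α−8)))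
  = ∫_{(α²−4α−8−α√(α²−8α))/8}^∞ dv/√(v(v²−(α²/4−α−2)v+α+1))`. -/
theorem isogeny_period_identity (α : ℝ) (h : α < -1) :
    (∫ u in Set.Ioi (0 : ℝ),
        1 / Real.sqrt (u * (u ^ 2 + 2 * (α ^ 2 / 4 - α - 2) * u + α ^ 3 / 16 * (α - 8)))) =
      ∫ v in Set.Ioi ((α ^ 2 - 4 * α - 8 - α * Real.sqrt (α ^ 2 - 8 * α)) / 8),
        1 / Real.sqrt (v * (v ^ 2 - (α ^ 2 / 4 - α - 2) * v + α + 1)) := by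
  set c : ℝ := α ^ 2 / 4 - α - 2 with hc
  set s : ℝ := Real.sqrt (α ^ 2 - 8 * α) with hsdef
  have hdisc : (0:ℝ) < α ^ 2 - 8 * α := by nlinarith
  have hs2 : s ^ 2 = α ^ 2 - 8 * α := Real.sq_sqrt hdisc.le
  have hspos : 0 < s := Real.sqrt_pos.mpr hdisc
  set v₀ : ℝ := (α ^ 2 - 4 * α - 8 - α * s) / 8 with hv0def
  have hv0 : 0 < v₀ := by
    have h1 : (α^2 - 4*α - 8 - α*s) * (-(α*s) - (α^2 - 4*α - 8)) = -64*(α+1) := by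
      linear_combination α^2 * hs2
    have hsum : 0 < (α^2-4*α-8-α*s) + (-(α*s) - (α^2-4*α-8)) := by
      nlinarith [mul_pos (show (0:ℝ) < -α by linarith) hspos]
    have hX : 0 < α^2 - 4*α - 8 - α*s := by
      nlinarith [h1, hsum, sq_nonneg (α^2-4*α-8-α*s)]
    rw [hv0def]; linarith
  have hroot : v₀ ^ 2 - c * v₀ + (α + 1) = 0 := by
    rw [hv0def, hc]; linear_combination (α^2/64) * hs2
  set φ : ℝ → ℝ := fun v => v - c + (α + 1) / v with hφ
  set f' : ℝ → ℝ := fun v => 1 - (α + 1) / v ^ 2 with hf'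
  have hφ0 : φ v₀ = 0 := by
    rw [hφ]; field_simp; linear_combination hroot
  have hderiv : ∀ v : ℝ, v ≠ 0 → HasDerivAt φ (f' v) v := by
    intro v hv
    have h1 : HasDerivAt (fun v : ℝ => v - c + (α + 1) * v⁻¹)
        (1 + (α + 1) * (-(v ^ 2)⁻¹)) v :=
      (((hasDerivAt_id v).sub_const c).add ((hasDerivAt_inv hv).const_mul (α + 1)))
    have h2 : (fun v : ℝ => v - c + (α + 1) * v⁻¹) = φ := by
      funext x; rw [hφ]; ring
    have h3 : 1 + (α + 1) * (-(v ^ 2)⁻¹) = f' v := by rw [hf']; field_simp; ring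
    rw [h2, h3] at h1; exact h1
  have hfppos : ∀ v : ℝ, 0 < v → 0 < f' v := by
    intro v hv
    have : (α + 1) / v ^ 2 < 0 := div_neg_of_neg_of_pos (by linarith) (by positivity)
    rw [hf']; simp only []; linarith
  have hmono : StrictMonoOn φ (Ici v₀) := by
    apply strictMonoOn_of_deriv_pos (convex_Ici v₀)
    · intro v hv
      exact ((hderiv v (lt_of_lt_of_le hv0 hv).ne').continuousAt).continuousWithinAt
    · intro v hv
      rw [interior_Ici, mem_Ioi] at hv
      have hvpos : 0 < v := lt_trans hv0 hv
      rw [(hderiv v hvpos.ne').deriv]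
      exact hfppos v hvpos
  have hinj : InjOn φ (Ioi v₀) := (hmono.mono Ioi_subset_Ici_self).injOn
  have himage : φ '' (Ioi v₀) = Ioi 0 := by
    apply Subset.antisymm
    · rintro u ⟨v, hv, rfl⟩
      rw [mem_Ioi] at hv ⊢
      calc (0:ℝ) = φ v₀ := hφ0.symm
        _ < φ v := hmono (self_mem_Ici) (le_of_lt hv) hv
    · have hpre : IsPreconnected (Ioi v₀) := isPreconnected_Ioi
      have hl₁ : 𝓝[Ioi v₀] v₀ ≤ 𝓟 (Ioi v₀) := inf_le_right
      have hl₂ : (atTop : Filter ℝ) ≤ 𝓟 (Ioi v₀) := le_principal_iff.mpr (Ioi_mem_atTop v₀)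
      have hcont : ContinuousOn φ (Ioi v₀) := fun v hv =>
        ((hderiv v (lt_trans hv0 hv).ne').continuousAt).continuousWithinAt
      have ht₁ : Tendsto φ (𝓝[Ioi v₀] v₀) (𝓝 0) := by
        rw [← hφ0]
        exact ((hderiv v₀ hv0.ne').continuousAt).continuousWithinAt
      have ht₂ : Tendsto φ atTop atTop := by
        have h1 : Tendsto (fun v : ℝ => v - c) atTop atTop :=
          tendsto_atTop_add_const_right _ _ tendsto_id
        have h2 : Tendsto (fun v : ℝ => (α + 1) / v) atTop (𝓝 0) := by
          simpa [div_eq_mul_inv] using tendsto_inv_atTop_zero.const_mul (α + 1)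
        exact h1.atTop_add h2
      exact hpre.intermediate_value_Ioi hl₁ hl₂ hcont ht₁ ht₂
  have hCoV := integral_image_eq_integral_abs_deriv_smul (measurableSet_Ioi (a := v₀))
      (fun v hv => (hderiv v (lt_trans hv0 hv).ne').hasDerivWithinAt) hinj
      (fun u => 1 / Real.sqrt (u * (u ^ 2 + 2 * c * u + α ^ 3 / 16 * (α - 8))))
  rw [himage] at hCoV
  rw [hCoV]
  apply setIntegral_congr_fun (measurableSet_Ioi)
  intro v hv
  rw [mem_Ioi] at hv
  have hvpos : 0 < v := lt_trans hv0 hv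
  have hfp : 0 < f' v := hfppos v hvpos
  have key : φ v * ((φ v) ^ 2 + 2 * c * (φ v) + α ^ 3 / 16 * (α - 8))
      = (f' v) ^ 2 * (v * (v ^ 2 - c * v + α + 1)) := by
    rw [hφ, hf', hc]; field_simp; ring
  simp only [smul_eq_mul]
  rw [key, Real.sqrt_mul (sq_nonneg _), Real.sqrt_sq hfp.le, abs_of_pos hfp,
    mul_one_div, div_mul_eq_div_div, div_self hfp.ne']
end

section
/- For α ≥ 4, the substitution t = ((α+1)s+α−1)/(2(2s+α−2)) gives ∫_{(8+α²−α√(α²+16))/32}^{1} dt/√((1−t)(α²t−(4t−1)²)) = ∫_{(−(α+4)+√(α²+16))/4}^{1} ds/√((1−s)(2s+α−2)(2s²+(α+4)s+α)). -/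
open Real intervalIntegral

/-! The Möbius substitution `t = φ(s)` pulls the quartic `(1 - t)(α²t - (4t - 1)²)` back to
`φ'(s)² · (1 - s)(2s + α - 2)(2s² + (α + 4)s + α)`, so `φ'(s) dt/√(…)` is exactly the second
differential. Since `φ' > 0` on the range of integration and `φ` maps the endpoints
`(-(α + 4) + √(α² + 16))/4` and `1` to `(8 + α² - α√(α² + 16))/32` and `1`, the monotone change
of variables formula applies; it needs no integrability, so the singular endpoints cause no
trouble. -/

theorem hasDerivAt_moebius {a b c d x : ℝ} (hx : c * x + d ≠ 0) :
    HasDerivAt (fun x => (a * x + b) / (c * x + d)) ((a * d - b * c) / (c * x + d) ^ 2) x := by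
  have hnum : HasDerivAt (fun x => a * x + b) a x := by
    simpa using ((hasDerivAt_id x).const_mul a).add_const b
  have hden : HasDerivAt (fun x => c * x + d) c x := by
    simpa using ((hasDerivAt_id x).const_mul c).add_const d
  exact (hnum.div hden hx).congr_deriv (by ring)

theorem one_div_sqrt_mul_of_eq_sq_mul {F G k : ℝ} (hk : 0 < k) (h : F = k ^ 2 * G) :
    1 / √F * k = 1 / √G := by
  rw [h, sqrt_mul (sq_nonneg k), sqrt_sq hk.le]
  field_simp

namespace CycleIdentity

/-- The substitution `t = ((α+1)s + α - 1) / (2(2s + α - 2))`, written as a Möbius map. -/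
noncomputable def subst (α s : ℝ) : ℝ := ((α + 1) * s + (α - 1)) / (4 * s + (2 * α - 4))

noncomputable def substDeriv (α s : ℝ) : ℝ := 2 * α * (α - 3) / (4 * s + (2 * α - 4)) ^ 2

variable {α : ℝ}

theorem hasDerivAt_subst {s : ℝ} (hs : 4 * s + (2 * α - 4) ≠ 0) :
    HasDerivAt (subst α) (substDeriv α s) s := by
  refine (hasDerivAt_moebius (a := α + 1) (b := α - 1) hs).congr_deriv ?_
  unfold substDeriv
  ring

theorem subst_one (hα : α ≠ 0) : subst α 1 = 1 := by
  rw [subst, div_eq_one_iff_eq (by contrapose! hα; linarith)]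
  ring

theorem subst_lower {r : ℝ} (hr : r ^ 2 = α ^ 2 + 16) (hpos : α - 8 + r ≠ 0) :
    subst α ((-(α + 4) + r) / 4) = (8 + α ^ 2 - α * r) / 32 := by
  rw [subst, div_eq_iff (by contrapose! hpos; linarith)]
  linear_combination (α / 32) * hr

theorem quartic_subst {s : ℝ} (hs : 4 * s + (2 * α - 4) ≠ 0) :
    (1 - subst α s) * (α ^ 2 * subst α s - (4 * subst α s - 1) ^ 2) =
      substDeriv α s ^ 2 * ((1 - s) * (2 * s + α - 2) * (2 * s ^ 2 + (α + 4) * s + α)) := by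
  unfold subst substDeriv
  rw [mul_comm 4 s, mul_comm 2 α] at hs ⊢
  field_simp
  ring

end CycleIdentity

open CycleIdentity Set in
/-- For `α ≥ 4`, the substitution `t = ((α+1)s+α−1)/(2(2s+α−2))` gives
`∫_{(8+α²−α√(α²+16))/32}^{1} dt/√((1−t)(α²t−(4t−1)²))
  = ∫_{(−(α+4)+√(α²+16))/4}^{1} ds/√((1−s)(2s+α−2)(2s²+(α+4)s+α))`. -/
theorem cycle_identity_Q_R (α : ℝ) (h : 4 ≤ α) :
    ∫ t in ((8 + α ^ 2 - α * Real.sqrt (α ^ 2 + 16)) / 32)..1,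
        1 / Real.sqrt ((1 - t) * (α ^ 2 * t - (4 * t - 1) ^ 2)) =
      ∫ s in ((-(α + 4) + Real.sqrt (α ^ 2 + 16)) / 4)..1,
        1 / Real.sqrt ((1 - s) * (2 * s + α - 2) * (2 * s ^ 2 + (α + 4) * s + α)) := by
  set r := √(α ^ 2 + 16)
  have hr : r ^ 2 = α ^ 2 + 16 := sq_sqrt (by positivity)
  have hr₀ : 0 ≤ r := sqrt_nonneg _
  have hαr : α < r := by nlinarith
  set s₀ := (-(α + 4) + r) / 4 with hs₀_def
  have hs₀ : s₀ ≤ 1 := by nlinarith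
  have hden : ∀ s ∈ uIcc s₀ 1, 0 < 4 * s + (2 * α - 4) := fun s hs => by
    rw [uIcc_of_le hs₀] at hs; linarith [hs.1]
  have hderiv : ∀ s ∈ uIcc s₀ 1, 0 < substDeriv α s := fun s hs => by
    have := hden s hs
    have : 0 < α - 3 := by linarith
    unfold substDeriv
    positivity
  have hchange := integral_comp_mul_deriv_of_deriv_nonneg (a := s₀) (b := 1)
    (g := fun t => 1 / √((1 - t) * (α ^ 2 * t - (4 * t - 1) ^ 2))) (f' := substDeriv α)
    (fun s hs => (hasDerivAt_subst (hden s hs).ne').continuousAt.continuousWithinAt)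
    (fun s hs => hasDerivAt_subst (hden s (Ioo_subset_Icc_self hs)).ne')
    (fun s hs => (hderiv s (Ioo_subset_Icc_self hs)).le)
  rw [subst_one (by linarith), subst_lower hr (by linarith)] at hchange
  rw [← hchange]
  exact integral_congr fun s hs =>
    one_div_sqrt_mul_of_eq_sq_mul (hderiv s hs) (quartic_subst (hden s hs).ne')
end
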